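/- arXiv:0710.5018 — 5 statements merged into one kernel-verified Lean document; each statement's English description precedes it below -/
import Mathlib

section
/- Let D be an essential integral domain with quotient field K, i.e., there is a set Δ of prime ideals of D such that D = ⋂{D_P : P ∈ Δ} and D_P is a valuation domain for each P ∈ Δ. Then (c_D(fg))^{⋆_Δ} = (c_D(f)·c_D(g))^{⋆_Δ} for all nonzero f, g ∈ K[X], where E^{⋆_Δ} := ⋂{E D_P : P ∈ Δ}. However, if D is neither a Prüfer domain nor quasilocal, then there exist two nonzero nonunits x, y ∈ D with D = D_x ∩ D_y such that, setting E^⋆ := E D_x ∩ E D_y for nonzero D-submodules E of K, one has (c_D(fg))^⋆ ≠ (c_D(f)·c_D(g))^⋆ for some nonzero f, g ∈ K[X]; in particular D is not a P⋆MD for this stable (semi)star operation ⋆ of finite type. -/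
/-!
Over a valuation domain Gauss's lemma gives `c(fg) = c(f) c(g)`; localizing at each `P ∈ Δ`
yields the `⋆_Δ`-content formula.

For the second part take a nonzero finitely generated ideal `I` with `I I⁻¹ ≠ D`, a maximal ideal
`M ⊇ I I⁻¹ ∩ D`, a second maximal ideal `N`, and write `1 = y + x` with `y ∈ M`, `x ∈ N`. Then
`D = D_x ∩ D_y`, and `1 ∉ I I⁻¹ D_x` because no power of `x` lies in `M`. Since
`E ⊆ E^⋆ ⊆ E D_x`, the `⋆`-content formula would give the content formula over `D_x`. But over
any domain the content formula makes every nonzero finitely generated fractional ideal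
invertible, and `(I D_x)⁻¹ = I⁻¹ D_x` for finitely generated `I`, which would put `1` in
`I I⁻¹ D_x`.
-/

open Polynomial

noncomputable section

def polyContent (D K : Type*) [CommRing D] [Field K] [Algebra D K] (h : K[X]) :
    Submodule D K :=
  Submodule.span D (Set.range h.coeff)

/-- The set `E D_P = {x ∈ K : s • x ∈ E for some s ∈ D ∖ P}`. -/
def primeLocSet (D K : Type*) [CommRing D] [Field K] [Algebra D K]
    (P : Ideal D) (E : Submodule D K) : Set K :=
  {x : K | ∃ s : D, s ∉ P ∧ s • x ∈ E}

/-- The set `E D_x = {z ∈ K : x^k • z ∈ E for some k ≥ 0}`, where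
`D_x` is the ring of fractions of `D` with respect to `{x^k : k ≥ 0}`. -/
def elemLocSet (D K : Type*) [CommRing D] [Field K] [Algebra D K]
    (x : D) (E : Submodule D K) : Set K :=
  {z : K | ∃ k : ℕ, x ^ k • z ∈ E}

section Content

variable {R K : Type*} [CommRing R] [Field K] [Algebra R K]

lemma polyContent_mul_le_iff {f g : K[X]} {N : Submodule R K} :
    polyContent R K f * polyContent R K g ≤ N ↔ ∀ i j, f.coeff i * g.coeff j ∈ N := by
  rw [polyContent, polyContent, Submodule.span_mul_span, Submodule.span_le]
  constructor
  · exact fun h i j => h ⟨_, ⟨i, rfl⟩, _, ⟨j, rfl⟩, rfl⟩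
  · rintro h _ ⟨_, ⟨i, rfl⟩, _, ⟨j, rfl⟩, rfl⟩
    exact h i j

lemma coeff_mul_coeff_mem_polyContent_mul (f g : K[X]) (i j : ℕ) :
    f.coeff i * g.coeff j ∈ polyContent R K f * polyContent R K g :=
  polyContent_mul_le_iff.mp le_rfl i j

lemma polyContent_mul_le (f g : K[X]) :
    polyContent R K (f * g) ≤ polyContent R K f * polyContent R K g := by
  rw [polyContent, Submodule.span_le]
  rintro _ ⟨n, rfl⟩
  rw [coeff_mul]
  exact Submodule.sum_mem _ fun p _ => coeff_mul_coeff_mem_polyContent_mul f g p.1 p.2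

variable (R K) in
def ContentFormula : Prop :=
  ∀ f g : K[X], f ≠ 0 → g ≠ 0 → polyContent R K (f * g) = polyContent R K f * polyContent R K g

end Content

section Localization

variable {D K : Type*} [CommRing D] [Field K] [Algebra D K]

/-- `E S⁻¹D = {z ∈ K : s • z ∈ E for some s ∈ S}`. -/
def locSubmodule (S : Submonoid D) (E : Submodule D K) : Submodule D K where
  carrier := {z | ∃ s ∈ S, s • z ∈ E}
  zero_mem' := ⟨1, S.one_mem, by rw [smul_zero]; exact E.zero_mem⟩
  add_mem' := by
    rintro z w ⟨s, hs, hz⟩ ⟨t, ht, hw⟩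
    refine ⟨t * s, S.mul_mem ht hs, ?_⟩
    rw [smul_add, mul_smul, mul_smul, smul_comm t s w]
    exact add_mem (E.smul_mem t hz) (E.smul_mem s hw)
  smul_mem' := by
    rintro d z ⟨s, hs, hz⟩
    exact ⟨s, hs, by rw [smul_comm]; exact E.smul_mem d hz⟩

variable {S : Submonoid D} {E F : Submodule D K}

lemma mem_locSubmodule {z : K} : z ∈ locSubmodule S E ↔ ∃ s ∈ S, s • z ∈ E := Iff.rfl

lemma le_locSubmodule : E ≤ locSubmodule S E :=
  fun z hz => ⟨1, S.one_mem, by rwa [one_smul]⟩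

lemma locSubmodule_mono (h : E ≤ F) : locSubmodule S E ≤ locSubmodule S F :=
  fun _ ⟨s, hs, hz⟩ => ⟨s, hs, h hz⟩

lemma locSubmodule_locSubmodule_le : locSubmodule S (locSubmodule S E) ≤ locSubmodule S E := by
  rintro z ⟨s, hs, t, ht, hz⟩
  exact ⟨t * s, S.mul_mem ht hs, by rwa [mul_smul]⟩

lemma mul_mem_locSubmodule {z w : K} (hz : z ∈ locSubmodule S E) (hw : w ∈ locSubmodule S F) :
    z * w ∈ locSubmodule S (E * F) := by
  obtain ⟨s, hs, hz⟩ := hz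
  obtain ⟨t, ht, hw⟩ := hw
  refine ⟨s * t, S.mul_mem hs ht, ?_⟩
  rw [← smul_mul_smul_comm]
  exact Submodule.mul_mem_mul hz hw

lemma exists_smul_mem_of_forall_mem_locSubmodule {ι : Type*} (t : Finset ι) (G : ι → K)
    (h : ∀ i ∈ t, G i ∈ locSubmodule S E) : ∃ s ∈ S, ∀ i ∈ t, s • G i ∈ E := by
  classical
  induction t using Finset.induction_on with
  | empty => exact ⟨1, S.one_mem, by simp⟩
  | insert j t _ ih =>
    obtain ⟨s, hs, hst⟩ := ih fun i hi => h i (Finset.mem_insert_of_mem hi)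
    obtain ⟨r, hr, hrj⟩ := h j (Finset.mem_insert_self j t)
    refine ⟨s * r, S.mul_mem hs hr, fun i hi => ?_⟩
    rcases Finset.mem_insert.mp hi with rfl | hi
    · rw [mul_smul]
      exact E.smul_mem s hrj
    · rw [mul_comm, mul_smul]
      exact E.smul_mem r (hst i hi)

lemma locSubmodule_powers_inter_of_isCoprime {x y : D} (hxy : IsCoprime x y) (E : Submodule D K) :
    (locSubmodule (Submonoid.powers x) E : Set K) ∩ locSubmodule (Submonoid.powers y) E = E := by
  refine subset_antisymm ?_ fun z hz => ⟨le_locSubmodule hz, le_locSubmodule hz⟩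
  rintro z ⟨⟨_, ⟨k, rfl⟩, hk⟩, ⟨_, ⟨l, rfl⟩, hl⟩⟩
  obtain ⟨u, v, huv⟩ := hxy.pow (m := k) (n := l)
  have hz : z = u • x ^ k • z + v • y ^ l • z := by
    rw [smul_smul, smul_smul, ← add_smul, huv, one_smul]
  rw [SetLike.mem_coe, hz]
  exact add_mem (E.smul_mem u hk) (E.smul_mem v hl)

lemma primeLocSet_eq_locSubmodule (P : Ideal D) [P.IsPrime] (E : Submodule D K) :
    primeLocSet D K P E = locSubmodule P.primeCompl E := rfl

lemma elemLocSet_eq_locSubmodule (x : D) (E : Submodule D K) :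
    elemLocSet D K x E = locSubmodule (Submonoid.powers x) E := by
  ext z
  simp only [elemLocSet, SetLike.mem_coe, mem_locSubmodule, Submonoid.mem_powers_iff]
  constructor
  · rintro ⟨k, hk⟩
    exact ⟨x ^ k, ⟨k, rfl⟩, hk⟩
  · rintro ⟨_, ⟨k, rfl⟩, hk⟩
    exact ⟨k, hk⟩

end Localization

section Valuation

variable {R Γ₀ : Type*} [CommRing R] [LinearOrderedCommGroupWithZero Γ₀] (v : Valuation R Γ₀)

lemma Valuation.exists_first_max_coeff (f : R[X]) :
    ∃ n, (∀ i, v (f.coeff i) ≤ v (f.coeff n)) ∧ ∀ i < n, v (f.coeff i) < v (f.coeff n) := by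
  classical
  have hmax : ∃ n, ∀ i, v (f.coeff i) ≤ v (f.coeff n) := by
    obtain ⟨n, -, hn⟩ :=
      (Finset.range (f.natDegree + 1)).exists_max_image (v ∘ f.coeff) ⟨0, by simp⟩
    refine ⟨n, fun i => ?_⟩
    rcases lt_or_ge i (f.natDegree + 1) with hi | hi
    · exact hn i (Finset.mem_range.mpr hi)
    · rw [coeff_eq_zero_of_natDegree_lt (by omega), v.map_zero]
      exact zero_le
  refine ⟨Nat.find hmax, Nat.find_spec hmax, fun i hi => ?_⟩
  obtain ⟨j, hj⟩ := not_forall.mp (Nat.find_min hmax hi)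
  exact (not_le.mp hj).trans_le (Nat.find_spec hmax j)

/-- Gauss's lemma for valuations: if `m` and `n` are the first indices where the coefficients of
`f` and `g` have maximal valuation, every other term of `(f * g).coeff (m + n)` has strictly
smaller valuation than `f.coeff m * g.coeff n`. -/
theorem Valuation.exists_coeff_mul_le (f g : R[X]) :
    ∃ k, ∀ i j, v (f.coeff i * g.coeff j) ≤ v ((f * g).coeff k) := by
  obtain ⟨m, hm, hm_lt⟩ := v.exists_first_max_coeff f
  obtain ⟨n, hn, hn_lt⟩ := v.exists_first_max_coeff g
  refine ⟨m + n, fun i j => (v.map_mul _ _ ▸ mul_le_mul' (hm i) (hn j)).trans ?_⟩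
  rcases eq_or_ne (v (f.coeff m) * v (g.coeff n)) 0 with h0 | h0
  · rw [h0]
    exact zero_le
  have hrest : v (∑ p ∈ (Finset.HasAntidiagonal.antidiagonal (m + n)).erase (m, n),
      f.coeff p.1 * g.coeff p.2) < v (f.coeff m) * v (g.coeff n) := by
    refine v.map_sum_lt h0 fun p hp => ?_
    obtain ⟨hpmn, hp⟩ := Finset.mem_erase.mp hp
    rw [Finset.HasAntidiagonal.mem_antidiagonal] at hp
    rw [v.map_mul]
    have : p.1 < m ∨ p.2 < n := by
      by_contra! h
      exact hpmn (Prod.ext (by omega) (by omega))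
    rcases this with h | h
    · exact mul_lt_mul_of_lt_of_le_of_nonneg_of_pos (hm_lt _ h) (hn _) zero_le
        (zero_lt_iff.mpr (right_ne_zero_of_mul h0))
    · exact mul_lt_mul_of_le_of_lt_of_nonneg_of_pos (hm _) (hn_lt _ h) zero_le
        (zero_lt_iff.mpr (left_ne_zero_of_mul h0))
  rw [coeff_mul, ← Finset.add_sum_erase _ _ (a := (m, n))
    (Finset.HasAntidiagonal.mem_antidiagonal.mpr rfl), v.map_add_eq_of_lt_left (v.map_mul _ _ ▸ hrest), v.map_mul]

theorem ValuationSubring.exists_coeff_mul_eq_mul {K : Type*} [Field K] (A : ValuationSubring K)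
    (f g : K[X]) : ∃ k, ∀ i j, ∃ e ∈ A, f.coeff i * g.coeff j = e * (f * g).coeff k := by
  obtain ⟨k, hk⟩ := A.valuation.exists_coeff_mul_le f g
  refine ⟨k, fun i j => ?_⟩
  rcases eq_or_ne ((f * g).coeff k) 0 with h0 | h0
  · refine ⟨0, A.zero_mem, ?_⟩
    have := hk i j
    rw [h0, map_zero, le_zero_iff, Valuation.zero_iff] at this
    rw [this, zero_mul]
  · refine ⟨f.coeff i * g.coeff j / (f * g).coeff k, ?_, (div_mul_cancel₀ _ h0).symm⟩
    rw [← A.valuation_le_one_iff, map_div₀,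
      div_le_one₀ (zero_lt_iff.mpr ((Valuation.ne_zero_iff _).mpr h0))]
    exact hk i j

end Valuation

theorem locSubmodule_polyContent_mul {D K : Type*} [CommRing D] [Field K] [Algebra D K]
    {S : Submonoid D} (A : ValuationSubring K)
    (hA : ∀ z, z ∈ A ↔ z ∈ locSubmodule S (1 : Submodule D K)) (f g : K[X]) :
    locSubmodule S (polyContent D K (f * g)) =
      locSubmodule S (polyContent D K f * polyContent D K g) := by
  refine le_antisymm (locSubmodule_mono (polyContent_mul_le f g)) ?_
  refine (locSubmodule_mono ?_).trans locSubmodule_locSubmodule_le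
  obtain ⟨k, hk⟩ := A.exists_coeff_mul_eq_mul f g
  refine polyContent_mul_le_iff.mpr fun i j => ?_
  obtain ⟨e, he, hij⟩ := hk i j
  obtain ⟨s, hs, hse⟩ := (hA e).mp he
  obtain ⟨d, hd⟩ := Submodule.mem_one.mp hse
  refine ⟨s, hs, ?_⟩
  rw [hij, ← smul_mul_assoc, ← hd, ← Algebra.smul_def]
  exact Submodule.smul_mem _ d (Submodule.subset_span ⟨k, rfl⟩)

section FractionRing

variable {D K : Type*} [CommRing D] [IsDomain D] [Field K] [Algebra D K] [IsFractionRing D K]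

open nonZeroDivisors

lemma mem_ofField_iff_mem_locSubmodule {S : Submonoid D} (hS : S ≤ D⁰) {z : K} :
    z ∈ Localization.subalgebra.ofField K S hS ↔ z ∈ locSubmodule S (1 : Submodule D K) := by
  constructor
  · rintro ⟨a, s, hs, rfl⟩
    refine ⟨s, hs, Submodule.mem_one.mpr ⟨a, ?_⟩⟩
    rw [Algebra.smul_def, mul_left_comm,
      mul_inv_cancel₀ (IsFractionRing.to_map_ne_zero_of_mem_nonZeroDivisors (hS hs)), mul_one]
  · rintro ⟨s, hs, hz⟩
    obtain ⟨a, ha⟩ := Submodule.mem_one.mp hz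
    refine ⟨a, s, hs, ?_⟩
    rw [ha, Algebra.smul_def, mul_comm,
      inv_mul_cancel_left₀ (IsFractionRing.to_map_ne_zero_of_mem_nonZeroDivisors (hS hs))]

theorem exists_valuationSubring_eq_locSubmodule (P : Ideal D) [P.IsPrime]
    [ValuationRing (Localization.AtPrime P)] :
    ∃ A : ValuationSubring K, ∀ z, z ∈ A ↔ z ∈ locSubmodule P.primeCompl (1 : Submodule D K) := by
  set B := Localization.subalgebra.ofField K P.primeCompl P.primeCompl_le_nonZeroDivisors
  let e := IsLocalization.algEquiv P.primeCompl (Localization.AtPrime P) B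
  have : ValuationRing B :=
    { cond' := fun a b => by
        obtain ⟨c, hc⟩ := ValuationRing.cond (e.symm a) (e.symm b)
        exact ⟨e c, hc.imp (fun h => e.symm.injective (by simpa using h))
          (fun h => e.symm.injective (by simpa using h))⟩ }
  refine ⟨.ofSubring B.toSubring fun z => (ValuationRing.isInteger_or_isInteger B z).imp ?_ ?_,
    fun z => ?_⟩
  · rintro ⟨b, rfl⟩
    exact b.2
  · rintro ⟨b, hb⟩
    rw [← hb]
    exact b.2
  · rw [ValuationSubring.mem_ofSubring]
    exact mem_ofField_iff_mem_locSubmodule P.primeCompl_le_nonZeroDivisors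

theorem primeLocSet_polyContent_mul (P : Ideal D) [P.IsPrime]
    [ValuationRing (Localization.AtPrime P)] (f g : K[X]) :
    primeLocSet D K P (polyContent D K (f * g)) =
      primeLocSet D K P (polyContent D K f * polyContent D K g) := by
  obtain ⟨A, hA⟩ := exists_valuationSubring_eq_locSubmodule (K := K) P
  rw [primeLocSet_eq_locSubmodule, primeLocSet_eq_locSubmodule,
    locSubmodule_polyContent_mul A hA f g]

end FractionRing

section Invertible

variable {R A : Type*} [CommSemiring R] [CommSemiring A] [Algebra R A]

lemma Submodule.isUnit_iff_one_mem_mul_one_div {W : Submodule R A} :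
    IsUnit W ↔ (1 : A) ∈ W * (1 / W) := by
  constructor
  · rintro ⟨u, rfl⟩
    have hinv : (↑u⁻¹ : Submodule R A) ≤ 1 / ↑u := by
      rw [Submodule.le_div_iff_mul_le, Units.inv_mul]
    refine Submodule.one_le.mp ?_
    calc (1 : Submodule R A) = ↑u * ↑u⁻¹ := u.mul_inv.symm
      _ ≤ ↑u * (1 / ↑u) := mul_le_mul_right hinv _
  · intro h
    exact IsUnit.of_mul_eq_one _
      (le_antisymm Submodule.mul_one_div_le_one (Submodule.one_le.mpr h))

lemma Submodule.mem_one_div_span_iff {s : Set A} {z : A} :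
    z ∈ 1 / span R s ↔ ∀ w ∈ s, z * w ∈ (1 : Submodule R A) := by
  rw [Submodule.mem_div_iff_forall_mul_mem]
  refine ⟨fun h w hw => h w (Submodule.subset_span hw), fun h w hw => ?_⟩
  induction hw using Submodule.span_induction with
  | mem w hw => exact h w hw
  | zero => rw [mul_zero]; exact zero_mem _
  | add w w' _ _ hw hw' => rw [mul_add]; exact add_mem hw hw'
  | smul r w _ hw => rw [mul_smul_comm]; exact Submodule.smul_mem _ r hw

lemma Submodule.isUnit_span_singleton {K : Type*} [Field K] [Algebra R K] {c : K} (hc : c ≠ 0) :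
    IsUnit (span R {c}) :=
  IsUnit.of_mul_eq_one (span R {c⁻¹}) <| by
    rw [Submodule.span_mul_span, Set.singleton_mul_singleton, mul_inv_cancel₀ hc,
      ← Submodule.one_eq_span]

lemma Submodule.span_insert_eq_add {R M : Type*} [Semiring R] [AddCommMonoid M] [Module R M]
    (x : M) (s : Set M) : span R (insert x s) = span R {x} + span R s := by
  rw [Submodule.span_insert, Submodule.add_eq_sup]

lemma add_mul_add_mul_add_eq {S : Type*} [IdemCommSemiring S] (a b c : S) :
    (a + b) * (b + c) * (c + a) = (a + b + c) * (a * b + b * c + c * a) := by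
  set Q := a * a * b + a * c * c + a * a * c + b * b * c + a * b * b + b * c * c
  have hl : (a + b) * (b + c) * (c + a) = a * b * c + a * b * c + Q := by ring
  have hr : (a + b + c) * (a * b + b * c + c * a) = a * b * c + a * b * c + a * b * c + Q := by
    ring
  rw [hl, hr, add_idem, add_idem]

end Invertible

namespace ContentFormula

variable {R K : Type*} [CommRing R] [Field K] [Algebra R K]

open Submodule

/-- A root `u` of a monic `p` over `R` splits off as `p = (X - u) h` with `h` monic, so
`-u = -u · 1 ∈ c(X - u) c(h) = c(p) ⊆ R`. -/
theorem mem_one_of_isIntegral (hR : ContentFormula R K) {u : K} (hu : IsIntegral R u) :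
    u ∈ (1 : Submodule R K) := by
  obtain ⟨q, hq, hqu⟩ := hu
  set p := q.map (algebraMap R K)
  have hp : p.IsRoot u := by rwa [IsRoot, eval_map]
  set h := p /ₘ (X - C u)
  have hfac : (X - C u) * h = p := mul_divByMonic_eq_iff_isRoot.mpr hp
  have hh : h.Monic := (monic_X_sub_C u).of_mul_monic_left (hfac ▸ hq.map _)
  have hp1 : polyContent R K p ≤ 1 := by
    rw [polyContent, span_le]
    rintro _ ⟨i, rfl⟩
    rw [coeff_map]
    exact algebraMap_mem _
  have hmem : -u * 1 ∈ polyContent R K p := by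
    rw [← hfac, hR _ _ (X_sub_C_ne_zero u) hh.ne_zero]
    exact mul_mem_mul (subset_span ⟨0, by simp⟩) (subset_span ⟨h.natDegree, hh.coeff_natDegree⟩)
  simpa using neg_mem (hp1 hmem)

/-- With `f = aX + b`, `g = aX - b`, the formula puts `ab` in `(a², b²)`; writing
`ab = r a² + s b²`, the element `t = r a / b` satisfies `t² - t + r s = 0`, so `t ∈ R`, and
`t / a`, `(1 - t) / b` lie in `(R : (a, b))` with `a · t / a + b · (1 - t) / b = 1`. -/
theorem isUnit_span_pair (hR : ContentFormula R K) {a b : K} (ha : a ≠ 0) (hb : b ≠ 0) :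
    IsUnit (span R {a, b}) := by
  set f : K[X] := C a * X + C b
  set g : K[X] := C a * X - C b
  have hf : f ≠ 0 := fun h => ha (by simpa [f] using congrArg (coeff · 1) h)
  have hg : g ≠ 0 := fun h => ha (by simpa [g] using congrArg (coeff · 1) h)
  have hfg : polyContent R K (f * g) ≤ span R {a * a, b * b} := by
    have e : f * g = C (a * a) * X ^ 2 - C (b * b) := by simp only [f, g, C_mul]; ring
    rw [polyContent, span_le, e]
    rintro _ ⟨n, rfl⟩
    rw [coeff_sub, coeff_C_mul_X_pow, coeff_C]
    refine sub_mem ?_ ?_ <;> split_ifs <;> first | exact zero_mem _ | exact subset_span (by simp)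
  obtain ⟨r, s, hrs⟩ : ∃ r s : R, r • (a * a) + s • (b * b) = a * b := by
    refine mem_span_pair.mp ?_
    have := (hR f g hf hg).symm ▸ coeff_mul_coeff_mem_polyContent_mul f g 1 0
    simpa [f, g] using neg_mem (hfg this)
  rw [Algebra.smul_def, Algebra.smul_def] at hrs
  set t := algebraMap R K r * a / b with ht_def
  have ht : t ∈ (1 : Submodule R K) := by
    refine hR.mem_one_of_isIntegral ⟨X ^ 2 - X + C (r * s), by monicity!, ?_⟩
    simp only [eval₂_add, eval₂_sub, eval₂_X_pow, eval₂_X, eval₂_C, ht_def]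
    rw [map_mul]
    field_simp
    linear_combination algebraMap R K r * hrs
  rw [isUnit_iff_one_mem_mul_one_div]
  have h1 : t / a ∈ 1 / span R {a, b} := by
    refine mem_one_div_span_iff.mpr ?_
    rintro w (rfl | rfl)
    · rwa [div_mul_cancel₀ _ ha]
    · convert Submodule.algebraMap_mem (A := K) r using 1
      rw [ht_def]
      field_simp
  have h2 : (1 - t) / b ∈ 1 / span R {a, b} := by
    refine mem_one_div_span_iff.mpr ?_
    rintro w (rfl | rfl)
    · convert Submodule.algebraMap_mem (A := K) s using 1
      rw [ht_def]
      field_simp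
      linear_combination -hrs
    · rw [div_mul_cancel₀ _ hb]
      exact sub_mem (one_le.mp le_rfl) ht
  have hsum : a * (t / a) + b * ((1 - t) / b) = 1 := by field_simp; ring
  rw [← hsum]
  exact add_mem (mul_mem_mul (subset_span (by simp)) h1) (mul_mem_mul (subset_span (by simp)) h2)

/-- Induction on the number of generators: for `s = {a, b} ∪ t`, the submodules spanned
by `{a, b}`, `{b} ∪ t` and `{a} ∪ t` are invertible, and by `add_mul_add_mul_add_eq` their
product is `span s` times another submodule. -/
theorem isUnit_span_finset (hR : ContentFormula R K) (s : Finset K) (hs : s.Nonempty)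
    (h0 : ∀ z ∈ s, z ≠ 0) : IsUnit (span R (s : Set K)) := by
  classical
  induction s using Finset.strongInduction with
  | H s ih =>
  obtain ⟨a, ha⟩ := hs
  obtain ⟨u, hau, rfl⟩ : ∃ u, a ∉ u ∧ s = insert a u :=
    ⟨s.erase a, Finset.notMem_erase a s, (Finset.insert_erase ha).symm⟩
  rcases u.eq_empty_or_nonempty with rfl | ⟨b, hb⟩
  · simpa using isUnit_span_singleton (h0 a (by simp))
  obtain ⟨t, hbt, rfl⟩ : ∃ t, b ∉ t ∧ u = insert b t :=
    ⟨u.erase b, Finset.notMem_erase b u, (Finset.insert_erase hb).symm⟩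
  have ha0 : a ≠ 0 := h0 a (by simp)
  have hb0 : b ≠ 0 := h0 b (by simp)
  rcases t.eq_empty_or_nonempty with rfl | ht
  · simpa using hR.isUnit_span_pair ha0 hb0
  have hat : a ∉ t := fun h => hau (Finset.mem_insert_of_mem h)
  have hba : b ∉ insert a t := by
    simpa [hbt] using fun h : b = a => hau (h ▸ Finset.mem_insert_self b t)
  have hAB : IsUnit (span R {a} + span R {b}) := by
    rw [← span_insert_eq_add]
    exact hR.isUnit_span_pair ha0 hb0
  have hBC : IsUnit (span R {b} + span R (t : Set K)) := by
    rw [← span_insert_eq_add, ← Finset.coe_insert]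
    exact ih _ (Finset.ssubset_insert hau) ⟨b, Finset.mem_insert_self b t⟩
      fun z hz => h0 z (Finset.mem_insert_of_mem hz)
  have hCA : IsUnit (span R (t : Set K) + span R {a}) := by
    rw [add_comm, ← span_insert_eq_add, ← Finset.coe_insert]
    refine ih _ ?_ ⟨a, Finset.mem_insert_self a t⟩ fun z hz => h0 z ?_
    · rw [Finset.insert_comm]
      exact Finset.ssubset_insert hba
    · rw [Finset.insert_comm]
      exact Finset.mem_insert_of_mem hz
  have hprod := (hAB.mul hBC).mul hCA
  rw [add_mul_add_mul_add_eq] at hprod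
  rw [Finset.coe_insert, Finset.coe_insert, span_insert_eq_add, span_insert_eq_add, ← add_assoc]
  exact isUnit_of_mul_isUnit_left hprod

theorem isUnit_of_fg (hR : ContentFormula R K) {W : Submodule R K} (hW : W.FG) (h0 : W ≠ ⊥) :
    IsUnit W := by
  classical
  obtain ⟨s, rfl⟩ := hW
  have hspan : span R ((s.filter (· ≠ 0) : Finset K) : Set K) = span R s := by
    rw [← span_sdiff_singleton_zero (s := (s : Set K))]
    congr 1
    ext z
    simp
  rw [← hspan]
  refine hR.isUnit_span_finset _ ?_ fun z hz => (Finset.mem_filter.mp hz).2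
  refine Finset.nonempty_iff_ne_empty.mpr fun he => h0 ?_
  rw [← hspan, he, Finset.coe_empty, span_empty]

end ContentFormula

section Away

variable {D K : Type*} [CommRing D] [IsDomain D] [Field K] [Algebra D K] [IsFractionRing D K]
  {S : Submonoid D} (hS : S ≤ nonZeroDivisors D)

local notation "Dₛ" => Localization.subalgebra.ofField K S hS

lemma mem_span_ofField_iff {E : Submodule D K} {z : K} :
    z ∈ Submodule.span Dₛ (E : Set K) ↔ z ∈ locSubmodule S E := by
  constructor
  · intro hz
    induction hz using Submodule.span_induction with
    | mem w hw => exact le_locSubmodule hw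
    | zero => exact zero_mem _
    | add _ _ _ _ hw hw' => exact add_mem hw hw'
    | smul r w _ hw =>
      obtain ⟨s, hs, hsw⟩ := hw
      obtain ⟨t, ht, htr⟩ := (mem_ofField_iff_mem_locSubmodule hS).mp r.2
      obtain ⟨a, ha⟩ := Submodule.mem_one.mp htr
      refine ⟨t * s, S.mul_mem ht hs, ?_⟩
      have e : (t * s) • (r • w) = a • (s • w) := by
        rw [Subalgebra.smul_def, smul_eq_mul]
        simp only [Algebra.smul_def, map_mul] at ha ⊢
        linear_combination (algebraMap D K s * w) * ha.symm
      rw [e]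
      exact E.smul_mem a hsw
  · rintro ⟨s, hs, hsz⟩
    have hs0 : algebraMap D K s ≠ 0 :=
      IsFractionRing.to_map_ne_zero_of_mem_nonZeroDivisors (hS hs)
    have hinv : (algebraMap D K s)⁻¹ ∈ Dₛ := ⟨1, s, hs, by rw [map_one, one_mul]⟩
    have hz : z = (⟨_, hinv⟩ : Dₛ) • (s • z) := by
      rw [Subalgebra.smul_def, smul_eq_mul, Algebra.smul_def, inv_mul_cancel_left₀ hs0]
    rw [hz]
    exact Submodule.smul_mem _ _ (Submodule.subset_span hsz)

lemma mem_polyContent_ofField_iff {h : K[X]} {z : K} :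
    z ∈ polyContent Dₛ K h ↔ z ∈ locSubmodule S (polyContent D K h) := by
  rw [polyContent, ← Submodule.span_span_of_tower D, mem_span_ofField_iff hS]
  rfl

theorem contentFormula_ofField
    (h : ∀ f g : K[X], f ≠ 0 → g ≠ 0 →
      polyContent D K f * polyContent D K g ≤ locSubmodule S (polyContent D K (f * g))) :
    ContentFormula Dₛ K := fun f g hf hg =>
  le_antisymm (polyContent_mul_le f g) <| polyContent_mul_le_iff.mpr fun i j =>
    (mem_polyContent_ofField_iff hS).mpr
      (h f g hf hg (coeff_mul_coeff_mem_polyContent_mul f g i j))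

lemma mem_locSubmodule_one_div_of_mem_one_div_span {F : Submodule D K} (hF : F.FG) {n : K}
    (hn : n ∈ 1 / Submodule.span Dₛ (F : Set K)) : n ∈ locSubmodule S (1 / F) := by
  obtain ⟨t, rfl⟩ := hF
  rw [Submodule.span_span_of_tower, Submodule.mem_one_div_span_iff] at hn
  obtain ⟨s, hs, hst⟩ := exists_smul_mem_of_forall_mem_locSubmodule t (n * ·) fun w hw => by
    obtain ⟨r, hr⟩ := Submodule.mem_one.mp (hn w hw)
    exact (mem_ofField_iff_mem_locSubmodule hS).mp (hr ▸ r.2)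
  refine ⟨s, hs, Submodule.mem_one_div_span_iff.mpr fun w hw => ?_⟩
  rw [smul_mul_assoc]
  exact hst w hw

theorem ContentFormula.one_mem_locSubmodule_mul_one_div (hR : ContentFormula Dₛ K)
    {F : Submodule D K} (hF : F.FG) (h0 : F ≠ ⊥) : (1 : K) ∈ locSubmodule S (F * (1 / F)) := by
  have hWfg : (Submodule.span Dₛ (F : Set K)).FG := by
    obtain ⟨t, rfl⟩ := hF
    exact ⟨t, (Submodule.span_span_of_tower D _ _).symm⟩
  have hW0 : Submodule.span Dₛ (F : Set K) ≠ ⊥ := by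
    obtain ⟨z, hz, hz0⟩ := Submodule.exists_mem_ne_zero_of_ne_bot h0
    exact fun hW => hz0 (Submodule.span_eq_bot.mp hW z hz)
  have h1 := Submodule.isUnit_iff_one_mem_mul_one_div.mp (hR.isUnit_of_fg hWfg hW0)
  refine Submodule.mul_induction_on h1 (fun m hm n hn => ?_) fun _ _ => add_mem
  exact mul_mem_locSubmodule ((mem_span_ofField_iff hS).mp hm)
    (mem_locSubmodule_one_div_of_mem_one_div_span hS hF hn)

end Away

theorem Ideal.exists_isCoprime_forall_pow_notMem {R : Type*} [CommRing R] {J : Ideal R}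
    (hJ : J ≠ ⊤) (hR : ¬∃! M : Ideal R, M.IsMaximal) :
    ∃ x y : R, IsCoprime x y ∧ ¬IsUnit x ∧ ¬IsUnit y ∧ ∀ k, x ^ k ∉ J := by
  obtain ⟨M, hM, hJM⟩ := Ideal.exists_le_maximal J hJ
  obtain ⟨N, hN, hNM⟩ : ∃ N : Ideal R, N.IsMaximal ∧ N ≠ M := by
    by_contra! h
    exact hR ⟨M, hM, h⟩
  have h1 : (1 : R) ∈ M ⊔ N := (hM.coprime_of_ne hN hNM.symm).symm ▸ Submodule.mem_top
  obtain ⟨y, hy, x, hx, hxy⟩ := Submodule.mem_sup.mp h1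
  have hxM : x ∉ M := fun h => hM.ne_top ((Ideal.eq_top_iff_one _).mpr (hxy ▸ add_mem hy h))
  exact ⟨x, y, ⟨1, 1, by rw [one_mul, one_mul, add_comm, hxy]⟩,
    fun h => hN.ne_top (Ideal.eq_top_of_isUnit_mem _ hx h),
    fun h => hM.ne_top (Ideal.eq_top_of_isUnit_mem _ hy h),
    fun k hk => hxM (hM.isPrime.mem_of_pow_mem k (hJM hk))⟩

theorem exists_isCoprime_one_notMem_locSubmodule_powers {D K : Type*} [CommRing D] [Field K]
    [Algebra D K] {F : Submodule D K} (hF : F * (1 / F) ≠ 1) (hD : ¬∃! M : Ideal D, M.IsMaximal) :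
    ∃ x y : D, IsCoprime x y ∧ ¬IsUnit x ∧ ¬IsUnit y ∧
      (1 : K) ∉ locSubmodule (Submonoid.powers x) (F * (1 / F)) := by
  have hJ : Submodule.comap (Algebra.linearMap D K) (F * (1 / F)) ≠ ⊤ := by
    intro h
    have h1 : (1 : D) ∈ Submodule.comap (Algebra.linearMap D K) (F * (1 / F)) :=
      h ▸ Submodule.mem_top
    rw [Submodule.mem_comap, Algebra.linearMap_apply, map_one] at h1
    exact hF (le_antisymm Submodule.mul_one_div_le_one (Submodule.one_le.mpr h1))
  obtain ⟨x, y, hxy, hx, hy, hxJ⟩ := Ideal.exists_isCoprime_forall_pow_notMem hJ hD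
  refine ⟨x, y, hxy, hx, hy, ?_⟩
  rintro ⟨_, ⟨k, rfl⟩, hk⟩
  exact hxJ k (by simpa [Algebra.smul_def] using hk)

theorem exists_polyContent_locSubmodule_powers_inter_ne {D K : Type*} [CommRing D] [IsDomain D]
    [Field K] [Algebra D K] [IsFractionRing D K] {x : D} (hx : x ≠ 0) {F : Submodule D K}
    (hF : F.FG) (h0 : F ≠ ⊥) (h1 : (1 : K) ∉ locSubmodule (Submonoid.powers x) (F * (1 / F)))
    (y : D) :
    ∃ f g : K[X], f ≠ 0 ∧ g ≠ 0 ∧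
      (locSubmodule (Submonoid.powers x) (polyContent D K (f * g)) : Set K) ∩
          locSubmodule (Submonoid.powers y) (polyContent D K (f * g)) ≠
        (locSubmodule (Submonoid.powers x) (polyContent D K f * polyContent D K g) : Set K) ∩
          locSubmodule (Submonoid.powers y) (polyContent D K f * polyContent D K g) := by
  by_contra! hcon
  have hS := powers_le_nonZeroDivisors_of_noZeroDivisors hx
  refine h1 ((contentFormula_ofField hS fun f g hf hg z hz => ?_).one_mem_locSubmodule_mul_one_div
    hS hF h0)
  have hz' : z ∈ (locSubmodule (Submonoid.powers x) (polyContent D K f * polyContent D K g) :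
      Set K) ∩ locSubmodule (Submonoid.powers y) (polyContent D K f * polyContent D K g) :=
    ⟨le_locSubmodule hz, le_locSubmodule hz⟩
  rw [← hcon f g hf hg] at hz'
  exact hz'.1

theorem essential_domain_content_formula_general
    (D K : Type*) [CommRing D] [IsDomain D] [Field K] [Algebra D K] [IsFractionRing D K]
    (Δ : Set (Ideal D)) (hprime : ∀ P ∈ Δ, P.IsPrime)
    -- each `D_P`, `P ∈ Δ`, is a valuation domain:
    (hval : ∀ P, ∀ hP : P ∈ Δ, ∀ a b : Localization.AtPrime P (hp := hprime P hP),
      ∃ c, a * c = b ∨ b * c = a) :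
    -- the `⋆_Δ`-content formula holds:
    (∀ f g : K[X], f ≠ 0 → g ≠ 0 →
      (⋂ P ∈ Δ, primeLocSet D K P (polyContent D K (f * g))) =
        ⋂ P ∈ Δ, primeLocSet D K P (polyContent D K f * polyContent D K g)) ∧
    -- moreover, if `D` is not Prüfer and not quasilocal:
    ((¬ ∀ I : Ideal D, I ≠ ⊥ → I.FG →
        Submodule.map (Algebra.linearMap D K) I *
            ((1 : Submodule D K) / Submodule.map (Algebra.linearMap D K) I) =
          (1 : Submodule D K)) →
      (¬ ∃! M : Ideal D, M.IsMaximal) →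
      ∃ x y : D, x ≠ 0 ∧ y ≠ 0 ∧ ¬ IsUnit x ∧ ¬ IsUnit y ∧
        -- `D = D_x ∩ D_y`:
        (elemLocSet D K x (1 : Submodule D K) ∩ elemLocSet D K y (1 : Submodule D K) =
          ((1 : Submodule D K) : Set K)) ∧
        -- the `⋆`-content formula fails for `E^⋆ = E D_x ∩ E D_y`:
        (∃ f g : K[X], f ≠ 0 ∧ g ≠ 0 ∧
          elemLocSet D K x (polyContent D K (f * g)) ∩
              elemLocSet D K y (polyContent D K (f * g)) ≠
            elemLocSet D K x (polyContent D K f * polyContent D K g) ∩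
              elemLocSet D K y (polyContent D K f * polyContent D K g)) ∧
        -- in particular, `D` is not a P`⋆`MD:
        ∃ F : Ideal D, F ≠ ⊥ ∧ F.FG ∧
          elemLocSet D K x (Submodule.map (Algebra.linearMap D K) F *
              ((1 : Submodule D K) / Submodule.map (Algebra.linearMap D K) F)) ∩
            elemLocSet D K y (Submodule.map (Algebra.linearMap D K) F *
              ((1 : Submodule D K) / Submodule.map (Algebra.linearMap D K) F)) ≠
            ((1 : Submodule D K) : Set K)) := by
  refine ⟨fun f g _ _ => Set.iInter₂_congr fun P hP => ?_, fun hPrufer hLocal => ?_⟩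
  · have := hprime P hP
    have : ValuationRing (Localization.AtPrime P) := { cond' := hval P hP }
    exact primeLocSet_polyContent_mul P f g
  push Not at hPrufer
  obtain ⟨I, hI0, hIfg, hI⟩ := hPrufer
  have hF0 : Submodule.map (Algebra.linearMap D K) I ≠ ⊥ := fun h =>
    hI0 <| Submodule.map_injective_of_injective (IsFractionRing.injective D K)
      (h.trans (Submodule.map_bot _).symm)
  obtain ⟨x, y, hxy, hx, hy, h1⟩ := exists_isCoprime_one_notMem_locSubmodule_powers hI hLocal
  have hx0 : x ≠ 0 := by
    rintro rfl
    exact hy (isCoprime_zero_left.mp hxy)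
  have hy0 : y ≠ 0 := by
    rintro rfl
    exact hx (isCoprime_zero_right.mp hxy)
  simp only [elemLocSet_eq_locSubmodule]
  exact ⟨x, y, hx0, hy0, hx, hy, locSubmodule_powers_inter_of_isCoprime hxy 1,
    exists_polyContent_locSubmodule_powers_inter_ne hx0
      (Submodule.FG.map (Algebra.linearMap D K) hIfg) hF0 h1 y,
    I, hI0, hIfg, fun h => h1 (h.symm.subset (Submodule.one_le.mp le_rfl)).1⟩

/-- **Corollary 1.11.** Let `D` be an essential domain with quotient field `K`, with set of
essential primes `Δ`.  Then `(c_D(fg))^{⋆_Δ} = (c_D(f)·c_D(g))^{⋆_Δ}` for all nonzero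
`f, g ∈ K[X]`.  However, if `D` is neither a Prüfer domain nor quasilocal, then there exist
nonzero nonunits `x, y ∈ D` with `D = D_x ∩ D_y` such that, for the stable (semi)star
operation of finite type `E^⋆ := E D_x ∩ E D_y`, the `⋆`-content formula fails for some
nonzero `f, g ∈ K[X]`; in particular `D` is not a P`⋆`MD. -/
theorem essential_domain_content_formula
    (D K : Type*) [CommRing D] [IsDomain D] [Field K] [Algebra D K] [IsFractionRing D K]
    (Δ : Set (Ideal D)) (hprime : ∀ P ∈ Δ, P.IsPrime)
    -- `D = ⋂ {D_P : P ∈ Δ}`: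
    (hinter : (⋂ P ∈ Δ, primeLocSet D K P (1 : Submodule D K)) =
      ((1 : Submodule D K) : Set K))
    -- each `D_P`, `P ∈ Δ`, is a valuation domain:
    (hval : ∀ P, ∀ hP : P ∈ Δ, ∀ a b : Localization.AtPrime P (hp := hprime P hP),
      ∃ c, a * c = b ∨ b * c = a) :
    -- the `⋆_Δ`-content formula holds:
    (∀ f g : K[X], f ≠ 0 → g ≠ 0 →
      (⋂ P ∈ Δ, primeLocSet D K P (polyContent D K (f * g))) =
        ⋂ P ∈ Δ, primeLocSet D K P (polyContent D K f * polyContent D K g)) ∧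
    -- moreover, if `D` is not Prüfer and not quasilocal:
    ((¬ ∀ I : Ideal D, I ≠ ⊥ → I.FG →
        Submodule.map (Algebra.linearMap D K) I *
            ((1 : Submodule D K) / Submodule.map (Algebra.linearMap D K) I) =
          (1 : Submodule D K)) →
      (¬ ∃! M : Ideal D, M.IsMaximal) →
      ∃ x y : D, x ≠ 0 ∧ y ≠ 0 ∧ ¬ IsUnit x ∧ ¬ IsUnit y ∧
        -- `D = D_x ∩ D_y`:
        (elemLocSet D K x (1 : Submodule D K) ∩ elemLocSet D K y (1 : Submodule D K) =
          ((1 : Submodule D K) : Set K)) ∧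
        -- the `⋆`-content formula fails for `E^⋆ = E D_x ∩ E D_y`:
        (∃ f g : K[X], f ≠ 0 ∧ g ≠ 0 ∧
          elemLocSet D K x (polyContent D K (f * g)) ∩
              elemLocSet D K y (polyContent D K (f * g)) ≠
            elemLocSet D K x (polyContent D K f * polyContent D K g) ∩
              elemLocSet D K y (polyContent D K f * polyContent D K g)) ∧
        -- in particular, `D` is not a P`⋆`MD:
        ∃ F : Ideal D, F ≠ ⊥ ∧ F.FG ∧
          elemLocSet D K x (Submodule.map (Algebra.linearMap D K) F *
              ((1 : Submodule D K) / Submodule.map (Algebra.linearMap D K) F)) ∩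
            elemLocSet D K y (Submodule.map (Algebra.linearMap D K) F *
              ((1 : Submodule D K) / Submodule.map (Algebra.linearMap D K) F)) ≠
            ((1 : Submodule D K) : Set K)) :=
  essential_domain_content_formula_general D K Δ hprime hval
end
end

section
/- Let D be an integral domain in which every t-invertible t-ideal is invertible. Then for every star operation ∗ of finite type on D, a nonzero fractional ideal of D is a ∗-invertible ∗-ideal if and only if it is invertible, if and only if it is a t-invertible t-ideal; consequently Pic(D) = Cl^∗(D) = Cl^t(D). -/
noncomputable section

/-- The `v`-operation `E ↦ (E⁻¹)⁻¹ = (D : (D : E))` on `D`-submodules of `K`. -/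
def vOp (D K : Type*) [CommRing D] [Field K] [Algebra D K] (E : Submodule D K) :
    Submodule D K :=
  (1 : Submodule D K) / ((1 : Submodule D K) / E)

/-- The `t`-operation `E ↦ ⋃ {Jᵛ : J ⊆ E nonzero finitely generated}`. -/
def tOp (D K : Type*) [CommRing D] [Field K] [Algebra D K] (E : Submodule D K) :
    Submodule D K :=
  ⨆ (J : Submodule D K) (_ : J ≠ ⊥) (_ : J.FG) (_ : J ≤ E), vOp D K J

section helpers
variable {D K : Type*} [CommRing D] [Field K] [Algebra D K]

lemma my_div_antitone {E F : Submodule D K} (h : E ≤ F) :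
    (1 : Submodule D K) / F ≤ 1 / E := fun x hx => by
  rw [Submodule.mem_div_iff_forall_mul_mem] at hx ⊢
  exact fun y hy => hx y (h hy)

lemma my_le_vOp (E : Submodule D K) : E ≤ vOp D K E := fun x hx => by
  rw [vOp, Submodule.mem_div_iff_forall_mul_mem]
  intro y hy
  rw [Submodule.mem_div_iff_forall_mul_mem] at hy
  simpa [mul_comm] using hy x hx

lemma my_vOp_mono {E F : Submodule D K} (h : E ≤ F) : vOp D K E ≤ vOp D K F :=
  my_div_antitone (my_div_antitone h)

lemma my_vOp_one : vOp D K (1 : Submodule D K) = 1 := by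
  apply le_antisymm _ (my_le_vOp _)
  intro x hx
  rw [vOp, Submodule.mem_div_iff_forall_mul_mem] at hx
  have h1 : (1 : K) ∈ (1 : Submodule D K) / (1 : Submodule D K) := by
    rw [Submodule.mem_div_iff_forall_mul_mem]; intro y hy; simpa using hy
  simpa using hx 1 h1

lemma my_tOp_le_vOp (E : Submodule D K) : tOp D K E ≤ vOp D K E := by
  refine iSup_le fun J => iSup_le fun _ => iSup_le fun _ => iSup_le fun hJE => my_vOp_mono hJE

lemma my_le_tOp (E : Submodule D K) : E ≤ tOp D K E := by
  intro z hz
  by_cases hz0 : z = 0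
  · simp [hz0]
  · have h1 : z ∈ vOp D K (Submodule.span D {z}) :=
      my_le_vOp _ (Submodule.mem_span_singleton_self z)
    have h2 : vOp D K (Submodule.span D {z}) ≤ tOp D K E := by
      refine le_iSup_of_le (Submodule.span D {z}) ?_
      refine le_iSup_of_le (by simpa [Submodule.span_singleton_eq_bot]) ?_
      refine le_iSup_of_le (Submodule.fg_span_singleton z) ?_
      exact le_iSup_of_le ((Submodule.span_singleton_le_iff_mem z E).2 hz) le_rfl
    exact h2 h1

lemma my_tOp_one : tOp D K (1 : Submodule D K) = 1 :=
  le_antisymm ((my_tOp_le_vOp _).trans my_vOp_one.le) (my_le_tOp _)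

lemma my_isFractional_of_le {S : Submonoid D} {E F : Submodule D K} (h : E ≤ F)
    (hF : IsFractional S F) : IsFractional S E := by
  obtain ⟨a, ha, hf⟩ := hF
  exact ⟨a, ha, fun b hb => hf b (h hb)⟩

lemma my_mul_one_div_le_one (E : Submodule D K) : E * ((1 : Submodule D K) / E) ≤ 1 := by
  rw [Submodule.mul_le]
  intro x hx y hy
  rw [Submodule.mem_div_iff_forall_mul_mem] at hy
  simpa [mul_comm] using hy x hx

lemma my_mul_ne_bot {E F : Submodule D K} (hE : E ≠ ⊥) (hF : F ≠ ⊥) : E * F ≠ ⊥ := by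
  obtain ⟨x, hx, hx0⟩ := Submodule.exists_mem_ne_zero_of_ne_bot hE
  obtain ⟨y, hy, hy0⟩ := Submodule.exists_mem_ne_zero_of_ne_bot hF
  intro h
  have : x * y ∈ E * F := Submodule.mul_mem_mul hx hy
  rw [h, Submodule.mem_bot] at this
  exact mul_ne_zero hx0 hy0 this

end helpers

/-- **Proposition 2.4.** Let `D` be an integral domain in which every `t`-invertible
`t`-ideal is invertible.  Then for every star operation `∗` of finite type on `D`, a nonzero
fractional ideal of `D` is a `∗`-invertible `∗`-ideal iff it is invertible, iff it is a
`t`-invertible `t`-ideal; consequently `Pic(D) = Cl^∗(D) = Cl^t(D)`. -/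
theorem star_class_group_eq_t_class_group_of_t_invertible_invertible
    (D K : Type*) [CommRing D] [IsDomain D] [Field K] [Algebra D K] [IsFractionRing D K]
    -- hypothesis: every `t`-invertible `t`-ideal of `D` is invertible
    (hDt : ∀ I : Submodule D K, I ≠ ⊥ → IsFractional (nonZeroDivisors D) I →
      tOp D K I = I → tOp D K (I * ((1 : Submodule D K) / I)) = 1 →
      I * ((1 : Submodule D K) / I) = 1)
    -- `st` is a star operation on `D` …
    (st : Submodule D K → Submodule D K)
    (hfrac : ∀ I : Submodule D K, I ≠ ⊥ → IsFractional (nonZeroDivisors D) I →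
      IsFractional (nonZeroDivisors D) (st I) ∧ st I ≠ ⊥)
    (hprin : ∀ x : K, x ≠ 0 → st (Submodule.span D {x}) = Submodule.span D {x})
    (hmul : ∀ x : K, x ≠ 0 → ∀ I : Submodule D K, I ≠ ⊥ →
      IsFractional (nonZeroDivisors D) I →
      st (Submodule.span D {x} * I) = Submodule.span D {x} * st I)
    (hmono : ∀ I J : Submodule D K, I ≠ ⊥ → IsFractional (nonZeroDivisors D) I →
      J ≠ ⊥ → IsFractional (nonZeroDivisors D) J → I ≤ J → st I ≤ st J)
    (hext : ∀ I : Submodule D K, I ≠ ⊥ → IsFractional (nonZeroDivisors D) I → I ≤ st I)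
    (hidem : ∀ I : Submodule D K, I ≠ ⊥ → IsFractional (nonZeroDivisors D) I →
      st (st I) = st I)
    -- … of finite type:
    (hfinite : ∀ I : Submodule D K, I ≠ ⊥ → IsFractional (nonZeroDivisors D) I →
      ∀ z ∈ st I, ∃ J : Submodule D K, J ≤ I ∧ J ≠ ⊥ ∧ J.FG ∧ z ∈ st J) :
    ∀ I : Submodule D K, I ≠ ⊥ → IsFractional (nonZeroDivisors D) I →
      -- `I` is a `∗`-invertible `∗`-ideal ↔ `I` is invertible …
      ((st I = I ∧ st (I * ((1 : Submodule D K) / I)) = 1) ↔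
          I * ((1 : Submodule D K) / I) = 1) ∧
      -- … ↔ `I` is a `t`-invertible `t`-ideal.
      (I * ((1 : Submodule D K) / I) = 1 ↔
          (tOp D K I = I ∧ tOp D K (I * ((1 : Submodule D K) / I)) = 1)) := by
  intro I hne hfr
  -- the inverse `1/I` is nonzero
  have hdivne : (1 : Submodule D K) / I ≠ ⊥ := by
    obtain ⟨a, haS, ha⟩ := hfr
    have ha0 : algebraMap D K a ≠ 0 := by
      have : a ≠ 0 := mem_nonZeroDivisors_iff_ne_zero.mp haS
      exact fun h => this (IsFractionRing.injective D K (by simpa using h))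
    have hmem : algebraMap D K a ∈ (1 : Submodule D K) / I := by
      rw [Submodule.mem_div_iff_forall_mul_mem]
      intro y hy
      obtain ⟨c, hc⟩ := ha y hy
      exact Submodule.mem_one.2 ⟨c, by rw [hc, Algebra.smul_def]⟩
    intro hb
    rw [hb, Submodule.mem_bot] at hmem
    exact ha0 hmem
  have hprodne : I * ((1 : Submodule D K) / I) ≠ ⊥ := my_mul_ne_bot hne hdivne
  have hprodfr : IsFractional (nonZeroDivisors D) (I * ((1 : Submodule D K) / I)) :=
    FractionalIdeal.isFractional_of_le_one _ (my_mul_one_div_le_one I)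
  -- every star operation is below the `v`-operation
  have st_le_v : ∀ E : Submodule D K, E ≠ ⊥ → IsFractional (nonZeroDivisors D) E →
      st E ≤ vOp D K E := by
    intro E hEne hEfr z hz
    rw [vOp, Submodule.mem_div_iff_forall_mul_mem]
    intro w hw
    by_cases hw0 : w = 0
    · simp [hw0]
    · have hwinv : w⁻¹ ≠ 0 := inv_ne_zero hw0
      have hEle : E ≤ Submodule.span D {w⁻¹} := by
        intro e he
        rw [Submodule.mem_div_iff_forall_mul_mem] at hw
        obtain ⟨c, hc⟩ := Submodule.mem_one.1 (hw e he)
        rw [Submodule.mem_span_singleton]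
        refine ⟨c, ?_⟩
        rw [Algebra.smul_def, hc]
        field_simp
      have hspanne : Submodule.span D {w⁻¹} ≠ ⊥ := by
        simpa [Submodule.span_singleton_eq_bot] using hwinv
      have hz' : z ∈ Submodule.span D {w⁻¹} :=
        (hprin w⁻¹ hwinv) ▸ (hmono E _ hEne hEfr hspanne
          (FractionalIdeal.isFractional_span_singleton _) hEle hz)
      obtain ⟨c, hc⟩ := Submodule.mem_span_singleton.1 hz'
      refine Submodule.mem_one.2 ⟨c, ?_⟩
      rw [← hc, Algebra.smul_def]
      field_simp
  -- a finite type star operation is below the `t`-operation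
  have st_le_t : ∀ E : Submodule D K, E ≠ ⊥ → IsFractional (nonZeroDivisors D) E →
      st E ≤ tOp D K E := by
    intro E hEne hEfr z hz
    obtain ⟨J, hJle, hJne, hJfg, hzJ⟩ := hfinite E hEne hEfr z hz
    have hJfr := my_isFractional_of_le hJle hEfr
    have hv : z ∈ vOp D K J := st_le_v J hJne hJfr hzJ
    have hsub : vOp D K J ≤ tOp D K E := by
      refine le_iSup_of_le J ?_
      refine le_iSup_of_le hJne ?_
      refine le_iSup_of_le hJfg ?_
      exact le_iSup_of_le hJle le_rfl
    exact hsub hv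
  -- invertible ideals are divisorial
  have inv_v : I * ((1 : Submodule D K) / I) = 1 → vOp D K I = I := by
    intro hI
    refine le_antisymm ?_ (my_le_vOp I)
    have h1 : vOp D K I * ((1 : Submodule D K) / I) ≤ 1 := by
      rw [Submodule.mul_le]
      intro x hx y hy
      rw [vOp, Submodule.mem_div_iff_forall_mul_mem] at hx
      exact hx y hy
    calc vOp D K I = vOp D K I * (I * ((1 : Submodule D K) / I)) := by rw [hI, mul_one]
      _ = (vOp D K I * ((1 : Submodule D K) / I)) * I := by ring
      _ ≤ 1 * I := mul_le_mul' h1 le_rfl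
      _ = I := one_mul I
  -- a `∗`-invertible `∗`-ideal is divisorial
  have star_v : st I = I → st (I * ((1 : Submodule D K) / I)) = 1 → vOp D K I = I := by
    intro h1 h2
    refine le_antisymm ?_ (my_le_vOp I)
    intro x hx
    by_cases hx0 : x = 0
    · rw [hx0]; exact I.zero_mem
    have hxm : ∀ t ∈ I * ((1 : Submodule D K) / I), x * t ∈ I := by
      intro t ht
      refine Submodule.mul_induction_on ht ?_ ?_
      · intro u hu v hv
        rw [vOp, Submodule.mem_div_iff_forall_mul_mem] at hx
        obtain ⟨c, hc⟩ := Submodule.mem_one.1 (hx v hv)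
        have he : x * (u * v) = c • u := by rw [Algebra.smul_def, hc]; ring
        exact he ▸ I.smul_mem c hu
      · intro t1 t2 ht1 ht2
        rw [mul_add]
        exact I.add_mem ht1 ht2
    have hspanle : Submodule.span D {x} * (I * ((1 : Submodule D K) / I)) ≤ I := by
      rw [Submodule.mul_le]
      intro s hs t ht
      obtain ⟨c, hc⟩ := Submodule.mem_span_singleton.1 hs
      have he : s * t = c • (x * t) := by rw [← hc, smul_mul_assoc]
      exact he ▸ I.smul_mem c (hxm t ht)
    have key : x ∈ st (Submodule.span D {x} * (I * ((1 : Submodule D K) / I))) := by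
      rw [hmul x hx0 _ hprodne hprodfr, h2, mul_one]
      exact Submodule.mem_span_singleton_self x
    have hne' : Submodule.span D {x} * (I * ((1 : Submodule D K) / I)) ≠ ⊥ :=
      my_mul_ne_bot (by simpa [Submodule.span_singleton_eq_bot]) hprodne
    have hfr' : IsFractional (nonZeroDivisors D)
        (Submodule.span D {x} * (I * ((1 : Submodule D K) / I))) :=
      IsFractional.mul (FractionalIdeal.isFractional_span_singleton x) hprodfr
    exact h1 ▸ (hmono _ I hne' hfr' hne hfr hspanle key)
  -- invertible implies everything
  have inv_to_all : I * ((1 : Submodule D K) / I) = 1 →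
      (st I = I ∧ st (I * ((1 : Submodule D K) / I)) = 1) ∧
      (tOp D K I = I ∧ tOp D K (I * ((1 : Submodule D K) / I)) = 1) := by
    intro hI
    have hv := inv_v hI
    refine ⟨⟨le_antisymm ((st_le_v I hne hfr).trans hv.le) (hext I hne hfr), ?_⟩,
      ⟨le_antisymm ((my_tOp_le_vOp I).trans hv.le) (my_le_tOp I), ?_⟩⟩
    · rw [hI, Submodule.one_eq_span]
      exact hprin 1 one_ne_zero
    · rw [hI]
      exact my_tOp_one
  -- a `∗`-invertible `∗`-ideal is invertible
  have star_to_inv : st I = I → st (I * ((1 : Submodule D K) / I)) = 1 →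
      I * ((1 : Submodule D K) / I) = 1 := by
    intro h1 h2
    have hv := star_v h1 h2
    refine hDt I hne hfr ?_ ?_
    · exact le_antisymm ((my_tOp_le_vOp I).trans hv.le) (my_le_tOp I)
    · refine le_antisymm ((my_tOp_le_vOp _).trans
        ((my_vOp_mono (my_mul_one_div_le_one I)).trans my_vOp_one.le)) ?_
      calc (1 : Submodule D K) = st (I * ((1 : Submodule D K) / I)) := h2.symm
        _ ≤ tOp D K (I * ((1 : Submodule D K) / I)) := st_le_t _ hprodne hprodfr
  exact ⟨⟨fun h => star_to_inv h.1 h.2, fun hI => (inv_to_all hI).1⟩,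
    ⟨fun hI => (inv_to_all hI).2, fun h => hDt I hne hfr h.1 h.2⟩⟩
end
end

section
/- Let ∗ be a star operation on an integral domain D. Then the set of ∗̃-invertible ∗̃-ideals of D coincides with the set of ∗_f-invertible ∗_f-ideals of D, and hence Cl^{∗̃}(D) = Cl^{∗_f}(D). In particular, Cl^w(D) = Cl^t(D). -/
noncomputable section

/-- The finite-type star operation `∗_f` associated to `∗`:
`I^{∗_f} := ⋃ {J^∗ : J ⊆ I nonzero finitely generated}`. -/
def finTypeOp (D K : Type*) [CommRing D] [Field K] [Algebra D K]
    (st : Submodule D K → Submodule D K) (I : Submodule D K) : Submodule D K :=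
  ⨆ (J : Submodule D K) (_ : J ≠ ⊥) (_ : J.FG) (_ : J ≤ I), st J

/-- The stable finite-type star operation `∗̃ = ∗_w` associated to `∗`:
`I^{∗̃} := ⋃ {(I : H) : H a nonzero finitely generated ideal of D with H^∗ = D}`. -/
def wTypeOp (D K : Type*) [CommRing D] [Field K] [Algebra D K]
    (st : Submodule D K → Submodule D K) (I : Submodule D K) : Submodule D K :=
  ⨆ (H : Ideal D) (_ : H ≠ ⊥) (_ : H.FG)
    (_ : st (Submodule.map (Algebra.linearMap D K) H) = 1),
    I / Submodule.map (Algebra.linearMap D K) H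

/-!
Both `∗̃` and `∗_f` are governed by the `∗`-GV-ideals, the nonzero finitely generated integral
ideals `J` with `J^∗ = D`: `I^{∗̃}` is the directed union of the `(I : J)`, and an integral ideal
`A` has `A^{∗_f} = D` iff it contains such a `J` (a finitely generated `J ⊆ A` with `1 ∈ J^∗`),
which by directedness is also the criterion for `A^{∗̃} = D`. Hence `I I⁻¹` is `∗̃`-trivial iff it
is `∗_f`-trivial. Since `∗̃ ≤ ∗_f`, every `∗_f`-ideal is a `∗̃`-ideal; conversely, if a GV-ideal
`J` lies in `I I⁻¹`, then `I^v J ⊆ I^v I⁻¹ I ⊆ I`, so `I^{∗_f} ⊆ I^v ⊆ (I : J) ⊆ I^{∗̃}`.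
Finally `v` is itself a star operation, which gives `Cl^w(D) = Cl^t(D)`.
-/

section StarOperations

open Submodule nonZeroDivisors

namespace Submodule

section CommSemiring

variable {R A : Type*} [CommSemiring R] [CommSemiring A] [Algebra R A]

theorem div_le_div_of_le_left (I : Submodule R A) {J J' : Submodule R A} (h : J ≤ J') :
    I / J' ≤ I / J :=
  le_div_iff_mul_le.mpr <| (mul_le_mul_right h _).trans <| le_div_iff_mul_le.mp le_rfl

theorem le_one_div_one_div (I : Submodule R A) : I ≤ 1 / (1 / I) :=
  le_div_iff_mul_le.mpr mul_one_div_le_one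

theorem one_div_one_div_one_div (I : Submodule R A) : 1 / (1 / (1 / I)) = 1 / I :=
  le_antisymm (div_le_div_of_le_left 1 (le_one_div_one_div I)) (le_one_div_one_div _)

theorem one_div_one : (1 : Submodule R A) / 1 = 1 :=
  le_antisymm (fun x hx => mul_one x ▸ hx 1 (one_le.mp le_rfl))
    (one_le_one_div.mpr le_rfl)

theorem one_div_mul_of_mul_eq_one {u u' : Submodule R A} (h : u * u' = 1) (I : Submodule R A) :
    1 / (u * I) = u' * (1 / I) := by
  refine le_antisymm ?_ (le_div_iff_mul_le.mpr ?_)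
  · have hu : u * (1 / (u * I)) ≤ 1 / I := by
      rw [le_div_iff_mul_le, mul_right_comm]
      exact mul_one_div_le_one
    calc 1 / (u * I) = u' * (u * (1 / (u * I))) := by rw [← mul_assoc, mul_comm u', h, one_mul]
      _ ≤ u' * (1 / I) := mul_le_mul_right hu _
  · calc u' * (1 / I) * (u * I) = u * u' * (I * (1 / I)) := by
          rw [mul_mul_mul_comm, mul_comm u' u, mul_comm (1 / I) I]
      _ ≤ 1 := by rw [h, one_mul]; exact mul_one_div_le_one

theorem mul_ne_bot [NoZeroDivisors A] {I J : Submodule R A} (hI : I ≠ ⊥) (hJ : J ≠ ⊥) :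
    I * J ≠ ⊥ :=
  mul_eq_bot.not.mpr (not_or.mpr ⟨hI, hJ⟩)

theorem one_ne_bot [Nontrivial A] : (1 : Submodule R A) ≠ ⊥ :=
  (Submodule.ne_bot_iff 1).mpr ⟨1, one_le.mp le_rfl, one_ne_zero⟩

end CommSemiring

theorem mem_biSup_of_directedOn {R M ι : Type*} [Semiring R] [AddCommMonoid M] [Module R M]
    {p : ι → Prop} {f : ι → Submodule R M} (hp : ∃ i, p i)
    (hdir : DirectedOn (f ⁻¹'o (· ≤ ·)) {i | p i}) {x : M} :
    x ∈ ⨆ (i) (_ : p i), f i ↔ ∃ i, p i ∧ x ∈ f i := by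
  have : Nonempty {i // p i} := hp.elim fun i hi => ⟨⟨i, hi⟩⟩
  rw [iSup_subtype', mem_iSup_of_directed (ι := {i // p i}) _ hdir.directed_val]
  simp only [Subtype.exists, exists_prop]

end Submodule

variable {D K : Type*} [CommRing D] [Field K] [Algebra D K]

theorem Submodule.span_singleton_mul_span_singleton_inv {x : K} (hx : x ≠ 0) :
    span D {x} * span D {x⁻¹} = 1 := by
  rw [span_mul_span, Set.singleton_mul_singleton, mul_inv_cancel₀ hx, one_eq_span]

theorem isFractional_one : IsFractional D⁰ (1 : Submodule D K) :=
  FractionalIdeal.isFractional_of_le_one 1 le_rfl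

theorem Submodule.one_div_ne_bot_of_isFractional [IsDomain D] [IsFractionRing D K]
    {I : Submodule D K} (hI : IsFractional D⁰ I) : 1 / I ≠ ⊥ := by
  obtain ⟨a, ha, haI⟩ := hI
  refine (Submodule.ne_bot_iff _).mpr ⟨algebraMap D K a, fun b hb => ?_,
    IsFractionRing.to_map_ne_zero_of_mem_nonZeroDivisors ha⟩
  obtain ⟨c, hc⟩ := haI b hb
  rw [← Algebra.smul_def, ← hc]
  exact algebraMap_mem c

structure IsStarOperation (st : Submodule D K → Submodule D K) : Prop where
  isFractional_ne_bot : ∀ I : Submodule D K, I ≠ ⊥ → IsFractional D⁰ I →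
    IsFractional D⁰ (st I) ∧ st I ≠ ⊥
  span_singleton : ∀ x : K, x ≠ 0 → st (span D {x}) = span D {x}
  span_singleton_mul : ∀ x : K, x ≠ 0 → ∀ I : Submodule D K, I ≠ ⊥ → IsFractional D⁰ I →
    st (span D {x} * I) = span D {x} * st I
  mono : ∀ I J : Submodule D K, I ≠ ⊥ → IsFractional D⁰ I → J ≠ ⊥ → IsFractional D⁰ J →
    I ≤ J → st I ≤ st J
  le_self : ∀ I : Submodule D K, I ≠ ⊥ → IsFractional D⁰ I → I ≤ st I
  idem : ∀ I : Submodule D K, I ≠ ⊥ → IsFractional D⁰ I → st (st I) = st I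

namespace IsStarOperation

variable {st : Submodule D K → Submodule D K} (hst : IsStarOperation st)
include hst

theorem one : st 1 = 1 := by
  simpa only [← one_eq_span] using hst.span_singleton 1 one_ne_zero

theorem apply_le_one {J : Submodule D K} (hJ0 : J ≠ ⊥) (hJ1 : J ≤ 1) : st J ≤ 1 :=
  (hst.mono J 1 hJ0 (FractionalIdeal.isFractional_of_le_one J hJ1) one_ne_bot isFractional_one
    hJ1).trans_eq hst.one

variable [IsFractionRing D K]

theorem apply_mul_le {A B : Submodule D K} (hA0 : A ≠ ⊥) (hA : IsFractional D⁰ A)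
    (hB0 : B ≠ ⊥) (hB : IsFractional D⁰ B) : st A * B ≤ st (A * B) := by
  refine Submodule.mul_le.mpr fun a ha b hb => ?_
  rcases eq_or_ne b 0 with rfl | hb0
  · simp
  have hbA : st (span D {b} * A) ≤ st (A * B) := by
    refine hst.mono _ _ (mul_ne_bot (by simpa using hb0) hA0)
      ((FractionalIdeal.isFractional_span_singleton b).mul hA) (mul_ne_bot hA0 hB0) (hA.mul hB) ?_
    rw [mul_comm A]
    exact mul_le_mul_left (span_le.mpr (Set.singleton_subset_iff.mpr hb)) A
  rw [hst.span_singleton_mul b hb0 A hA0 hA] at hbA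
  exact mul_comm b a ▸ hbA (mem_span_singleton_mul.mpr ⟨a, ha, rfl⟩)

theorem apply_apply_mul {A B : Submodule D K} (hA0 : A ≠ ⊥) (hA : IsFractional D⁰ A)
    (hB0 : B ≠ ⊥) (hB : IsFractional D⁰ B) : st (st A * B) = st (A * B) := by
  obtain ⟨hstA, hstA0⟩ := hst.isFractional_ne_bot A hA0 hA
  obtain ⟨hstAB, hstAB0⟩ := hst.isFractional_ne_bot _ (mul_ne_bot hA0 hB0) (hA.mul hB)
  refine le_antisymm ?_ <| hst.mono _ _ (mul_ne_bot hA0 hB0) (hA.mul hB)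
    (mul_ne_bot hstA0 hB0) (hstA.mul hB) (mul_le_mul_left (hst.le_self A hA0 hA) B)
  calc st (st A * B) ≤ st (st (A * B)) := hst.mono _ _ (mul_ne_bot hstA0 hB0) (hstA.mul hB)
        hstAB0 hstAB (hst.apply_mul_le hA0 hA hB0 hB)
    _ = st (A * B) := hst.idem _ (mul_ne_bot hA0 hB0) (hA.mul hB)

variable [IsDomain D]

theorem le_vOp {J : Submodule D K} (hJ0 : J ≠ ⊥) (hJ : IsFractional D⁰ J) : st J ≤ vOp D K J := by
  have hJinv0 : 1 / J ≠ ⊥ := one_div_ne_bot_of_isFractional hJ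
  have hJinv : IsFractional D⁰ (1 / J) := isFractional_one.div_of_nonzero hJ hJ0
  rw [vOp, Submodule.le_div_iff_mul_le]
  exact (hst.apply_mul_le hJ0 hJ hJinv0 hJinv).trans
    (hst.apply_le_one (mul_ne_bot hJ0 hJinv0) mul_one_div_le_one)

end IsStarOperation

theorem vOp_span_singleton_mul {x : K} (hx : x ≠ 0) (I : Submodule D K) :
    vOp D K (span D {x} * I) = span D {x} * vOp D K I := by
  have hinv : span D {x⁻¹} * span D {x} = 1 := by
    simpa only [inv_inv] using span_singleton_mul_span_singleton_inv (D := D) (inv_ne_zero hx)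
  rw [vOp, vOp, one_div_mul_of_mul_eq_one (span_singleton_mul_span_singleton_inv hx),
    one_div_mul_of_mul_eq_one hinv]

theorem vOp_mono : Monotone (vOp D K) := fun _ _ h =>
  div_le_div_of_le_left 1 (div_le_div_of_le_left 1 h)

theorem vOp_mul_mul_one_div_le (I : Submodule D K) : vOp D K I * (I * (1 / I)) ≤ I :=
  calc vOp D K I * (I * (1 / I)) = I * (1 / I * vOp D K I) := by
        rw [mul_left_comm, mul_comm (vOp D K I)]
    _ ≤ I * 1 := mul_le_mul_right mul_one_div_le_one I
    _ = I := mul_one I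

theorem isStarOperation_vOp [IsDomain D] [IsFractionRing D K] : IsStarOperation (vOp D K) where
  isFractional_ne_bot I hI0 hI :=
    ⟨isFractional_one.div_of_nonzero (isFractional_one.div_of_nonzero hI hI0)
        (one_div_ne_bot_of_isFractional hI),
      ne_bot_of_le_ne_bot hI0 (le_one_div_one_div I)⟩
  span_singleton x hx := by
    simpa only [mul_one, vOp, Submodule.one_div_one] using vOp_span_singleton_mul (D := D) hx 1
  span_singleton_mul x hx I _ _ := vOp_span_singleton_mul hx I
  mono _ _ _ _ _ _ h := vOp_mono h
  le_self I _ _ := le_one_div_one_div I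
  idem I _ _ := one_div_one_div_one_div (1 / I)

/-- The `∗`-GV-ideals; for `∗ = v` these are the Glaz–Vasconcelos ideals. -/
structure IsGV (st : Submodule D K → Submodule D K) (J : Submodule D K) : Prop where
  ne_bot : J ≠ ⊥
  fg : J.FG
  le_one : J ≤ 1
  eq_one : st J = 1

theorem IsGV.isFractional {st : Submodule D K → Submodule D K} {J : Submodule D K}
    (hJ : IsGV st J) : IsFractional D⁰ J :=
  FractionalIdeal.isFractional_of_le_one J hJ.le_one

/-- Ideals of `D` correspond to the submodules `J ≤ 1` of `K` via `map` and `comap`. -/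
theorem wTypeOp_eq_iSup_isGV [IsFractionRing D K] (st : Submodule D K → Submodule D K)
    (I : Submodule D K) : wTypeOp D K st I = ⨆ (J) (_ : IsGV st J), I / J := by
  set ι := Algebra.linearMap D K
  have hι : Function.Injective ι := IsFractionRing.injective D K
  refine le_antisymm (iSup_le fun H => iSup_le fun hH0 => iSup_le fun hHfg => iSup_le fun hHst =>
    le_iSup₂ (f := fun J (_ : IsGV st J) => I / J) (Submodule.map ι H) ⟨?_, Submodule.FG.map ι hHfg,
      LinearMap.map_le_range.trans_eq one_eq_range.symm, hHst⟩) (iSup₂_le fun J hJ => ?_)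
  · exact fun h => hH0 (map_injective_of_injective hι (h.trans (map_bot ι).symm))
  · have hJ_map : (J.comap ι).map ι = J := map_comap_eq_self (hJ.le_one.trans_eq one_eq_range)
    have hJ0 : J.comap ι ≠ ⊥ := fun h => hJ.ne_bot (by rw [← hJ_map, h, Submodule.map_bot])
    have hJfg : (J.comap ι).FG := fg_of_fg_map_injective ι hι (by rw [hJ_map]; exact hJ.fg)
    have hJst : st ((J.comap ι).map ι) = 1 := by rw [hJ_map]; exact hJ.eq_one
    rw [← hJ_map]
    exact le_iSup_of_le (J.comap ι) <| le_iSup_of_le hJ0 <| le_iSup_of_le hJfg <|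
      le_iSup_of_le hJst le_rfl

theorem IsGV.div_le_wTypeOp [IsFractionRing D K] {st : Submodule D K → Submodule D K}
    {J : Submodule D K} (hJ : IsGV st J) (I : Submodule D K) : I / J ≤ wTypeOp D K st I := by
  rw [wTypeOp_eq_iSup_isGV]
  exact le_iSup₂ (f := fun J (_ : IsGV st J) => I / J) J hJ

theorem apply_le_finTypeOp (st : Submodule D K → Submodule D K) {I J : Submodule D K}
    (hJ0 : J ≠ ⊥) (hJfg : J.FG) (hJI : J ≤ I) : st J ≤ finTypeOp D K st I :=
  le_iSup_of_le J <| le_iSup_of_le hJ0 <| le_iSup_of_le hJfg <| le_iSup_of_le hJI le_rfl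

namespace IsStarOperation

variable {st : Submodule D K → Submodule D K} (hst : IsStarOperation st)
include hst

theorem isGV_one : IsGV st 1 :=
  ⟨one_ne_bot, one_eq_span (R := D) (A := K) ▸ fg_span_singleton 1, le_rfl, hst.one⟩

theorem finTypeOp_le_one {A : Submodule D K} (hA : A ≤ 1) : finTypeOp D K st A ≤ 1 :=
  iSup_le fun _ => iSup_le fun hJ0 => iSup_le fun _ => iSup_le fun hJA =>
    hst.apply_le_one hJ0 (hJA.trans hA)

theorem mem_finTypeOp_iff {I : Submodule D K} (hI0 : I ≠ ⊥) (hI : IsFractional D⁰ I) {x : K} :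
    x ∈ finTypeOp D K st I ↔ ∃ J, (J ≠ ⊥ ∧ J.FG ∧ J ≤ I) ∧ x ∈ st J := by
  have hfrac {J : Submodule D K} (hJI : J ≤ I) : IsFractional D⁰ J :=
    FractionalIdeal.isFractional_of_le (J := ⟨I, hI⟩) hJI
  obtain ⟨a, haI, ha0⟩ := (Submodule.ne_bot_iff I).mp hI0
  have hfin : finTypeOp D K st I = ⨆ (J) (_ : J ≠ ⊥ ∧ J.FG ∧ J ≤ I), st J := by
    simp only [finTypeOp, iSup_and]
  rw [hfin]
  refine mem_biSup_of_directedOn ⟨span D {a}, by simpa using ha0, fg_span_singleton a,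
    (span_singleton_le_iff_mem a I).mpr haI⟩ ?_
  rintro J ⟨hJ0, hJfg, hJI⟩ J' ⟨hJ'0, hJ'fg, hJ'I⟩
  have hsup0 : J ⊔ J' ≠ ⊥ := ne_bot_of_le_ne_bot hJ0 le_sup_left
  have hsupI : J ⊔ J' ≤ I := sup_le hJI hJ'I
  exact ⟨J ⊔ J', ⟨hsup0, hJfg.sup hJ'fg, hsupI⟩,
    hst.mono _ _ hJ0 (hfrac hJI) hsup0 (hfrac hsupI) le_sup_left,
    hst.mono _ _ hJ'0 (hfrac hJ'I) hsup0 (hfrac hsupI) le_sup_right⟩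

theorem finTypeOp_eq_one_iff {A : Submodule D K} (hA : A ≤ 1) (hA0 : A ≠ ⊥) :
    finTypeOp D K st A = 1 ↔ ∃ J, IsGV st J ∧ J ≤ A := by
  have hAfrac : IsFractional D⁰ A := FractionalIdeal.isFractional_of_le_one A hA
  refine ⟨fun h => ?_, fun ⟨_, hJ, hJA⟩ => le_antisymm (hst.finTypeOp_le_one hA) ?_⟩
  · obtain ⟨J, ⟨hJ0, hJfg, hJA⟩, h1J⟩ :=
      (hst.mem_finTypeOp_iff hA0 hAfrac).mp (h ▸ one_le.mp le_rfl)
    have hJ1 := hJA.trans hA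
    exact ⟨J, ⟨hJ0, hJfg, hJ1, le_antisymm (hst.apply_le_one hJ0 hJ1) (one_le.mpr h1J)⟩, hJA⟩
  · exact hJ.eq_one.symm.le.trans (apply_le_finTypeOp st hJ.ne_bot hJ.fg hJA)

variable [IsFractionRing D K]

theorem isGV_mul {J J' : Submodule D K} (hJ : IsGV st J) (hJ' : IsGV st J') :
    IsGV st (J * J') where
  ne_bot := mul_ne_bot hJ.ne_bot hJ'.ne_bot
  fg := hJ.fg.mul hJ'.fg
  le_one := mul_le_one' hJ.le_one hJ'.le_one
  eq_one := by
    rw [← hst.apply_apply_mul hJ.ne_bot hJ.isFractional hJ'.ne_bot hJ'.isFractional, hJ.eq_one,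
      one_mul, hJ'.eq_one]

theorem le_wTypeOp (I : Submodule D K) : I ≤ wTypeOp D K st I :=
  (le_div_iff_mul_le.mpr (mul_one I).le).trans (hst.isGV_one.div_le_wTypeOp I)

theorem le_finTypeOp (I : Submodule D K) : I ≤ finTypeOp D K st I := by
  intro x hx
  rcases eq_or_ne x 0 with rfl | hx0
  · exact zero_mem _
  have hx0' : span D {x} ≠ ⊥ := by simpa using hx0
  refine apply_le_finTypeOp st hx0' (fg_span_singleton x)
    ((span_singleton_le_iff_mem x I).mpr hx) ?_
  exact hst.le_self _ hx0' (FractionalIdeal.isFractional_span_singleton x)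
    (mem_span_singleton_self x)

theorem wTypeOp_le_finTypeOp (I : Submodule D K) : wTypeOp D K st I ≤ finTypeOp D K st I := by
  rw [wTypeOp_eq_iSup_isGV]
  refine iSup₂_le fun J hJ x hx => ?_
  rcases eq_or_ne x 0 with rfl | hx0
  · exact zero_mem _
  have hx0' : span D {x} ≠ ⊥ := by simpa using hx0
  have hxJ : span D {x} * J ≤ I := le_div_iff_mul_le.mp ((span_singleton_le_iff_mem x _).mpr hx)
  have hst_xJ : st (span D {x} * J) = span D {x} := by
    rw [hst.span_singleton_mul x hx0 J hJ.ne_bot hJ.isFractional, hJ.eq_one, mul_one]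
  refine apply_le_finTypeOp st (mul_ne_bot hx0' hJ.ne_bot) ((fg_span_singleton x).mul hJ.fg) hxJ ?_
  rw [hst_xJ]
  exact mem_span_singleton_self x

theorem mem_wTypeOp_iff {I : Submodule D K} {x : K} :
    x ∈ wTypeOp D K st I ↔ ∃ J, IsGV st J ∧ x ∈ I / J := by
  rw [wTypeOp_eq_iSup_isGV]
  refine mem_biSup_of_directedOn (p := IsGV st) (f := (I / ·)) ⟨1, hst.isGV_one⟩
    fun J hJ J' hJ' => ⟨J * J', hst.isGV_mul hJ hJ',
      div_le_div_of_le_left I (mul_le_of_le_one_right' hJ'.le_one),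
      div_le_div_of_le_left I (mul_le_of_le_one_left' hJ.le_one)⟩

theorem wTypeOp_eq_one_iff {A : Submodule D K} (hA : A ≤ 1) :
    wTypeOp D K st A = 1 ↔ ∃ J, IsGV st J ∧ J ≤ A := by
  refine ⟨fun h => ?_, fun ⟨J, hJ, hJA⟩ => le_antisymm ?_ ?_⟩
  · obtain ⟨J, hJ, h1J⟩ := hst.mem_wTypeOp_iff.mp (h ▸ one_le.mp le_rfl)
    exact ⟨J, hJ, one_mem_div.mp h1J⟩
  · exact (hst.wTypeOp_le_finTypeOp A).trans (hst.finTypeOp_le_one hA)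
  · exact (one_le.mpr (one_mem_div.mpr hJA)).trans (hJ.div_le_wTypeOp A)

variable [IsDomain D]

theorem finTypeOp_le_vOp {I : Submodule D K} (hI : IsFractional D⁰ I) :
    finTypeOp D K st I ≤ vOp D K I :=
  iSup_le fun _ => iSup_le fun hJ0 => iSup_le fun _ => iSup_le fun hJI =>
    (hst.le_vOp hJ0 (FractionalIdeal.isFractional_of_le (J := ⟨I, hI⟩) hJI)).trans (vOp_mono hJI)

theorem finTypeOp_le_wTypeOp_of_wTypeOp_mul_one_div_eq_one {I : Submodule D K}
    (hI : IsFractional D⁰ I) (h : wTypeOp D K st (I * (1 / I)) = 1) :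
    finTypeOp D K st I ≤ wTypeOp D K st I := by
  obtain ⟨J, hJ, hJI⟩ := (hst.wTypeOp_eq_one_iff mul_one_div_le_one).mp h
  calc finTypeOp D K st I ≤ vOp D K I := hst.finTypeOp_le_vOp hI
    _ ≤ I / J := le_div_iff_mul_le.mpr <|
        (mul_le_mul_right hJI _).trans (vOp_mul_mul_one_div_le I)
    _ ≤ wTypeOp D K st I := hJ.div_le_wTypeOp I

theorem wTypeOp_invertible_iff_finTypeOp_invertible {I : Submodule D K} (hI0 : I ≠ ⊥)
    (hI : IsFractional D⁰ I) :
    (wTypeOp D K st I = I ∧ wTypeOp D K st (I * (1 / I)) = 1) ↔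
      (finTypeOp D K st I = I ∧ finTypeOp D K st (I * (1 / I)) = 1) := by
  have hinv0 : I * (1 / I) ≠ ⊥ := mul_ne_bot hI0 (one_div_ne_bot_of_isFractional hI)
  have hinv : wTypeOp D K st (I * (1 / I)) = 1 ↔ finTypeOp D K st (I * (1 / I)) = 1 :=
    (hst.wTypeOp_eq_one_iff mul_one_div_le_one).trans
      (hst.finTypeOp_eq_one_iff mul_one_div_le_one hinv0).symm
  constructor
  · rintro ⟨hwI, hw⟩
    refine ⟨le_antisymm ?_ (hst.le_finTypeOp I), hinv.mp hw⟩
    exact (hst.finTypeOp_le_wTypeOp_of_wTypeOp_mul_one_div_eq_one hI hw).trans_eq hwI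
  · rintro ⟨hfI, hf⟩
    exact ⟨le_antisymm ((hst.wTypeOp_le_finTypeOp I).trans_eq hfI) (hst.le_wTypeOp I), hinv.mpr hf⟩

end IsStarOperation

end StarOperations

/-- **Proposition 2.7.** Let `∗` be a star operation on an integral domain `D`.  Then the
`∗̃`-invertible `∗̃`-ideals coincide with the `∗_f`-invertible `∗_f`-ideals, and hence
`Cl^{∗̃}(D) = Cl^{∗_f}(D)`.  In particular, `Cl^w(D) = Cl^t(D)`. -/
theorem wTypeOp_invertible_iff_finTypeOp_invertible
    (D K : Type*) [CommRing D] [IsDomain D] [Field K] [Algebra D K] [IsFractionRing D K]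
    -- `st` is a star operation on `D`:
    (st : Submodule D K → Submodule D K)
    (hfrac : ∀ I : Submodule D K, I ≠ ⊥ → IsFractional (nonZeroDivisors D) I →
      IsFractional (nonZeroDivisors D) (st I) ∧ st I ≠ ⊥)
    (hprin : ∀ x : K, x ≠ 0 → st (Submodule.span D {x}) = Submodule.span D {x})
    (hmul : ∀ x : K, x ≠ 0 → ∀ I : Submodule D K, I ≠ ⊥ →
      IsFractional (nonZeroDivisors D) I →
      st (Submodule.span D {x} * I) = Submodule.span D {x} * st I)
    (hmono : ∀ I J : Submodule D K, I ≠ ⊥ → IsFractional (nonZeroDivisors D) I →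
      J ≠ ⊥ → IsFractional (nonZeroDivisors D) J → I ≤ J → st I ≤ st J)
    (hext : ∀ I : Submodule D K, I ≠ ⊥ → IsFractional (nonZeroDivisors D) I → I ≤ st I)
    (hidem : ∀ I : Submodule D K, I ≠ ⊥ → IsFractional (nonZeroDivisors D) I →
      st (st I) = st I) :
    -- a nonzero fractional ideal is a `∗̃`-invertible `∗̃`-ideal iff it is a
    -- `∗_f`-invertible `∗_f`-ideal …
    (∀ I : Submodule D K, I ≠ ⊥ → IsFractional (nonZeroDivisors D) I →
      ((wTypeOp D K st I = I ∧
          wTypeOp D K st (I * ((1 : Submodule D K) / I)) = 1) ↔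
        (finTypeOp D K st I = I ∧
          finTypeOp D K st (I * ((1 : Submodule D K) / I)) = 1))) ∧
    -- … in particular (taking `∗ = v`, so that `∗_f = t` and `∗̃ = w`),
    -- `Cl^w(D) = Cl^t(D)`:
    (∀ I : Submodule D K, I ≠ ⊥ → IsFractional (nonZeroDivisors D) I →
      ((wTypeOp D K (vOp D K) I = I ∧
          wTypeOp D K (vOp D K) (I * ((1 : Submodule D K) / I)) = 1) ↔
        (finTypeOp D K (vOp D K) I = I ∧
          finTypeOp D K (vOp D K) (I * ((1 : Submodule D K) / I)) = 1))) :=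
  have hst : IsStarOperation st := ⟨hfrac, hprin, hmul, hmono, hext, hidem⟩
  ⟨fun _ => hst.wTypeOp_invertible_iff_finTypeOp_invertible,
    fun _ => isStarOperation_vOp.wTypeOp_invertible_iff_finTypeOp_invertible⟩
end
end

section
/- Let D be a one-dimensional valuation domain, not a DVR, with quotient field K, additive valuation ω : K^× → ℝ, and value group G := ω(K^×) dense in ℝ. For a nonzero fractional ideal I of D, set φ(I) := sup{ω(x) : x ∈ K^×, I ⊆ xD} (a well-defined real number). Then for nonzero fractional ideals I, J of D, the following are equivalent: (i) φ(I) = φ(J); (ii) {xD : x ∈ K^×, I ⊆ xD} = {xD : x ∈ K^×, J ⊆ xD}; (iii) I^v = J^v. -/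
/-!
For nonzero `x`, `I ⊆ xD` iff `ω x ≤ ω y` for every nonzero `y ∈ I`. Hence `φ(I)` is the infimum
of the values on `I` and `I ⊆ xD ↔ ω x ≤ φ(I)`, which gives (i) ↔ (ii). The equivalence
(ii) ↔ (iii) is pure ideal theory: `w ∈ I⁻¹ ↔ I ⊆ w⁻¹D`, and `I ⊆ xD ↔ Iᵛ ⊆ xD`.
-/

noncomputable section

/-- `φ(I) := sup {ω(x) : x ∈ K^×, I ⊆ xD}`. -/
def phiVal (D K : Type*) [CommRing D] [Field K] [Algebra D K] (ω : K → ℝ)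
    (I : Submodule D K) : ℝ :=
  sSup {r : ℝ | ∃ x : K, x ≠ 0 ∧ I ≤ Submodule.span D {x} ∧ ω x = r}

section Divisorial

variable {D K : Type*} [CommRing D] [Field K] [Algebra D K]

theorem mem_span_singleton_iff_mul_inv_mem_one {x : K} (hx : x ≠ 0) (y : K) :
    y ∈ Submodule.span D {x} ↔ y * x⁻¹ ∈ (1 : Submodule D K) := by
  rw [Submodule.mem_span_singleton, Submodule.mem_one]
  refine exists_congr fun a => ?_
  rw [Algebra.smul_def, eq_mul_inv_iff_mul_eq₀ hx]

theorem mem_one_div_iff_le_span_inv {w : K} (hw : w ≠ 0) (I : Submodule D K) :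
    w ∈ 1 / I ↔ I ≤ Submodule.span D {w⁻¹} := by
  simp only [Submodule.mem_div_iff_forall_mul_mem, SetLike.le_def,
    mem_span_singleton_iff_mul_inv_mem_one (inv_ne_zero hw), inv_inv, mul_comm w]

theorem le_vOp (I : Submodule D K) : I ≤ vOp D K I :=
  Submodule.le_div_iff_mul_le.mpr Submodule.mul_one_div_le_one

theorem vOp_le_span_singleton_iff {x : K} (hx : x ≠ 0) (I : Submodule D K) :
    vOp D K I ≤ Submodule.span D {x} ↔ I ≤ Submodule.span D {x} := by
  refine ⟨(le_vOp I).trans, fun hI z hz => ?_⟩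
  have hx' : x⁻¹ ∈ 1 / I :=
    (mem_one_div_iff_le_span_inv (inv_ne_zero hx) I).mpr (by rwa [inv_inv])
  exact (mem_span_singleton_iff_mul_inv_mem_one hx z).mpr
    (Submodule.mem_div_iff_forall_mul_mem.mp hz _ hx')

theorem vOp_eq_vOp_iff (I J : Submodule D K) :
    vOp D K I = vOp D K J ↔
      ∀ x : K, x ≠ 0 → (I ≤ Submodule.span D {x} ↔ J ≤ Submodule.span D {x}) := by
  refine ⟨fun h x hx => ?_, fun h => ?_⟩
  · rw [← vOp_le_span_singleton_iff hx, h, vOp_le_span_singleton_iff hx]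
  · have hdual : (1 : Submodule D K) / I = 1 / J := by
      ext w
      rcases eq_or_ne w 0 with rfl | hw
      · simp only [zero_mem]
      · rw [mem_one_div_iff_le_span_inv hw, mem_one_div_iff_le_span_inv hw, h _ (inv_ne_zero hw)]
    rw [vOp, vOp, hdual]

theorem exists_le_span_singleton_of_isFractional [IsFractionRing D K] {I : Submodule D K}
    (hI : IsFractional (nonZeroDivisors D) I) : ∃ x : K, x ≠ 0 ∧ I ≤ Submodule.span D {x} := by
  obtain ⟨d, hd, hdI⟩ := hI
  have hd0 : algebraMap D K d ≠ 0 := (IsLocalization.map_units K ⟨d, hd⟩).ne_zero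
  refine ⟨(algebraMap D K d)⁻¹, inv_ne_zero hd0, fun y hy => ?_⟩
  rw [mem_span_singleton_iff_mul_inv_mem_one (inv_ne_zero hd0), inv_inv, mul_comm,
    ← Algebra.smul_def, Submodule.mem_one]
  exact hdI y hy

end Divisorial

section Valuation

variable {D K : Type*} [CommRing D] [Field K] [Algebra D K] {ω : K → ℝ}

theorem val_inv (hhom : ∀ x y : K, x ≠ 0 → y ≠ 0 → ω (x * y) = ω x + ω y) {x : K}
    (hx : x ≠ 0) : ω x⁻¹ = -ω x := by
  have h1 := hhom 1 1 one_ne_zero one_ne_zero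
  have hinv := hhom x x⁻¹ hx (inv_ne_zero hx)
  rw [mul_one] at h1
  rw [mul_inv_cancel₀ hx] at hinv
  linarith

theorem mem_span_singleton_iff_val_le
    (hhom : ∀ x y : K, x ≠ 0 → y ≠ 0 → ω (x * y) = ω x + ω y)
    (hD : ∀ x : K, (∃ d : D, algebraMap D K d = x) ↔ x = 0 ∨ 0 ≤ ω x)
    {x y : K} (hx : x ≠ 0) (hy : y ≠ 0) : y ∈ Submodule.span D {x} ↔ ω x ≤ ω y := by
  rw [mem_span_singleton_iff_mul_inv_mem_one hx, Submodule.mem_one, hD,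
    or_iff_right (mul_ne_zero hy (inv_ne_zero hx)), hhom _ _ hy (inv_ne_zero hx), val_inv hhom hx,
    ← sub_eq_add_neg, sub_nonneg]

theorem le_span_singleton_iff_forall_val_le
    (hhom : ∀ x y : K, x ≠ 0 → y ≠ 0 → ω (x * y) = ω x + ω y)
    (hD : ∀ x : K, (∃ d : D, algebraMap D K d = x) ↔ x = 0 ∨ 0 ≤ ω x)
    {x : K} (hx : x ≠ 0) (I : Submodule D K) :
    I ≤ Submodule.span D {x} ↔ ∀ y ∈ I, y ≠ 0 → ω x ≤ ω y := by
  refine forall₂_congr fun y _ => ?_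
  rcases eq_or_ne y 0 with rfl | hy
  · simp only [zero_mem, ne_eq, not_true_eq_false, IsEmpty.forall_iff]
  · rw [mem_span_singleton_iff_val_le hhom hD hx hy, imp_iff_right hy]

theorem le_span_singleton_iff_val_le_phiVal [IsFractionRing D K]
    (hhom : ∀ x y : K, x ≠ 0 → y ≠ 0 → ω (x * y) = ω x + ω y)
    (hD : ∀ x : K, (∃ d : D, algebraMap D K d = x) ↔ x = 0 ∨ 0 ≤ ω x)
    {I : Submodule D K} (hI : I ≠ ⊥) (hIf : IsFractional (nonZeroDivisors D) I)
    {x : K} (hx : x ≠ 0) : I ≤ Submodule.span D {x} ↔ ω x ≤ phiVal D K ω I := by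
  have hbound : ∀ y ∈ I, y ≠ 0 →
      ∀ r ∈ {r : ℝ | ∃ x : K, x ≠ 0 ∧ I ≤ Submodule.span D {x} ∧ ω x = r}, r ≤ ω y := by
    rintro y hy hy0 r ⟨x', hx', hle, rfl⟩
    exact (le_span_singleton_iff_forall_val_le hhom hD hx' I).mp hle y hy hy0
  refine ⟨fun hle => ?_, fun hle => (le_span_singleton_iff_forall_val_le hhom hD hx I).mpr ?_⟩
  · obtain ⟨y, hy, hy0⟩ := Submodule.exists_mem_ne_zero_of_ne_bot hI
    exact le_csSup ⟨ω y, hbound y hy hy0⟩ ⟨x, hx, hle, rfl⟩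
  · obtain ⟨x', hx', hle'⟩ := exists_le_span_singleton_of_isFractional hIf
    exact fun y hy hy0 => hle.trans (csSup_le ⟨ω x', x', hx', hle', rfl⟩ (hbound y hy hy0))

end Valuation

theorem phiVal_eq_iff_v_eq_general
    (D K : Type*) [CommRing D] [Field K] [Algebra D K] [IsFractionRing D K]
    (ω : K → ℝ)
    (hhom : ∀ x y : K, x ≠ 0 → y ≠ 0 → ω (x * y) = ω x + ω y)
    -- `D = {x ∈ K : x = 0 ∨ ω(x) ≥ 0}`:
    (hD : ∀ x : K, (∃ d : D, algebraMap D K d = x) ↔ x = 0 ∨ 0 ≤ ω x) :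
    ∀ I J : Submodule D K,
      I ≠ ⊥ → IsFractional (nonZeroDivisors D) I →
      J ≠ ⊥ → IsFractional (nonZeroDivisors D) J →
      List.TFAE
        [phiVal D K ω I = phiVal D K ω J,
         ∀ x : K, x ≠ 0 → (I ≤ Submodule.span D {x} ↔ J ≤ Submodule.span D {x}),
         vOp D K I = vOp D K J] := by
  intro I J hI hIf hJ hJf
  tfae_have 1 → 2 := fun h x hx => by
    rw [le_span_singleton_iff_val_le_phiVal hhom hD hI hIf hx,
      le_span_singleton_iff_val_le_phiVal hhom hD hJ hJf hx, h]
  tfae_have 2 → 1 := fun h => congrArg sSup <| Set.ext fun _ =>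
    exists_congr fun x => and_congr_right fun hx => and_congr_left' (h x hx)
  tfae_have 2 ↔ 3 := (vOp_eq_vOp_iff I J).symm
  tfae_finish

/-- **Lemma 2.9.** Let `D` be a one-dimensional valuation domain, not a DVR, with quotient
field `K`, valuation `ω : K^× → ℝ` and value group `G = ω(K^×)` dense in `ℝ`.  For nonzero
fractional ideals `I, J` of `D`, TFAE:
(i) `φ(I) = φ(J)`;
(ii) `{xD : I ⊆ xD} = {xD : J ⊆ xD}`;
(iii) `Iᵛ = Jᵛ`. -/
theorem phiVal_eq_iff_v_eq
    (D K : Type*) [CommRing D] [IsDomain D] [Field K] [Algebra D K] [IsFractionRing D K]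
    (ω : K → ℝ)
    (hhom : ∀ x y : K, x ≠ 0 → y ≠ 0 → ω (x * y) = ω x + ω y)
    (hmin : ∀ x y : K, x ≠ 0 → y ≠ 0 → x + y ≠ 0 → min (ω x) (ω y) ≤ ω (x + y))
    -- `D = {x ∈ K : x = 0 ∨ ω(x) ≥ 0}`:
    (hD : ∀ x : K, (∃ d : D, algebraMap D K d = x) ↔ x = 0 ∨ 0 ≤ ω x)
    -- `D` is not a DVR, i.e. the value group `G = ω(K^×)` is dense in `ℝ`:
    (hnotdvr : ¬ IsDiscreteValuationRing D)
    (hdense : ∀ a b : ℝ, a < b → ∃ x : K, x ≠ 0 ∧ a < ω x ∧ ω x < b) :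
    ∀ I J : Submodule D K,
      I ≠ ⊥ → IsFractional (nonZeroDivisors D) I →
      J ≠ ⊥ → IsFractional (nonZeroDivisors D) J →
      List.TFAE
        [phiVal D K ω I = phiVal D K ω J,
         ∀ x : K, x ≠ 0 → (I ≤ Submodule.span D {x} ↔ J ≤ Submodule.span D {x}),
         vOp D K I = vOp D K J] :=
  phiVal_eq_iff_v_eq_general D K ω hhom hD
end
end

section
/- Let D be a one-dimensional valuation domain, not a DVR, with quotient field K, additive valuation ω : K^× → ℝ, and value group G := ω(K^×) dense in ℝ, and define φ(I) := sup{ω(x) : x ∈ K^×, I ⊆ xD} for nonzero fractional ideals I of D. Then φ restricted to the set of divisorial fractional ideals of D is surjective onto ℝ (for every α ∈ ℝ there exists a divisorial fractional ideal I of D with φ(I) = α), and for a divisorial fractional ideal I of D, φ(I) ∈ G if and only if I is a nonzero principal fractional ideal. -/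
noncomputable section

/-!
Over a densely valued ring every divisorial fractional ideal is one of the "closed balls"
`J β = {y : ω y ≥ β}`: the inverse of a nonzero ideal `I` whose values have infimum `s` is
`J (-s)`, so `I^v = J s`. Density makes `β ↦ J β` injective with `φ (J β) = β`, while
`xD = J (ω x)`; hence `J β` is principal exactly when `β` is a value of `ω`.
-/

structure IsRealValuation (D : Type*) {K : Type*} [CommRing D] [Field K] [Algebra D K]
    (ω : K → ℝ) : Prop where
  map_mul : ∀ x y : K, x ≠ 0 → y ≠ 0 → ω (x * y) = ω x + ω y
  min_le_map_add : ∀ x y : K, x ≠ 0 → y ≠ 0 → x + y ≠ 0 → min (ω x) (ω y) ≤ ω (x + y)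
  mem_range_iff : ∀ x : K, (∃ d : D, algebraMap D K d = x) ↔ x = 0 ∨ 0 ≤ ω x

def HasDenseValues {K : Type*} [Field K] (ω : K → ℝ) : Prop :=
  ∀ a b : ℝ, a < b → ∃ x : K, x ≠ 0 ∧ a < ω x ∧ ω x < b

def valueSet {D K : Type*} [CommRing D] [Field K] [Algebra D K] (ω : K → ℝ)
    (I : Submodule D K) : Set ℝ :=
  ω '' ((I : Set K) \ {0})

namespace IsRealValuation

variable {D K : Type*} [CommRing D] [Field K] [Algebra D K] {ω : K → ℝ}
  (hω : IsRealValuation D ω)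
include hω

theorem map_one : ω 1 = 0 := by
  have := hω.map_mul 1 1 one_ne_zero one_ne_zero
  rw [one_mul] at this
  linarith

theorem map_inv {x : K} (hx : x ≠ 0) : ω x⁻¹ = -ω x := by
  have := hω.map_mul x x⁻¹ hx (inv_ne_zero hx)
  rw [mul_inv_cancel₀ hx, hω.map_one] at this
  linarith

theorem mem_one_iff {z : K} : z ∈ (1 : Submodule D K) ↔ z = 0 ∨ 0 ≤ ω z :=
  Submodule.mem_one.trans (hω.mem_range_iff z)

theorem mul_mem_one_iff {z y : K} (hz : z ≠ 0) (hy : y ≠ 0) :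
    z * y ∈ (1 : Submodule D K) ↔ 0 ≤ ω z + ω y := by
  rw [hω.mem_one_iff, hω.map_mul z y hz hy, or_iff_right (mul_ne_zero hz hy)]

def geSubmodule (β : ℝ) : Submodule D K where
  carrier := {y | y = 0 ∨ β ≤ ω y}
  zero_mem' := Or.inl rfl
  add_mem' := by
    intro a b ha hb
    rcases eq_or_ne a 0 with rfl | ha0
    · simpa using hb
    rcases eq_or_ne b 0 with rfl | hb0
    · simpa using ha
    rcases eq_or_ne (a + b) 0 with hab | hab
    · exact Or.inl hab
    exact Or.inr <| (le_min (ha.resolve_left ha0) (hb.resolve_left hb0)).trans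
      (hω.min_le_map_add a b ha0 hb0 hab)
  smul_mem' := by
    intro d y hy
    rw [Algebra.smul_def]
    rcases eq_or_ne (algebraMap D K d) 0 with hd | hd
    · exact Or.inl (by rw [hd, zero_mul])
    rcases eq_or_ne y 0 with rfl | hy0
    · exact Or.inl (mul_zero _)
    have hd_nonneg := (hω.mem_one_iff.mp (Submodule.algebraMap_mem d)).resolve_left hd
    exact Or.inr (by rw [hω.map_mul _ _ hd hy0]; linarith [hy.resolve_left hy0])

theorem mem_geSubmodule {β : ℝ} {y : K} : y ∈ hω.geSubmodule β ↔ y = 0 ∨ β ≤ ω y :=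
  Iff.rfl

theorem span_singleton_eq_geSubmodule {x : K} (hx : x ≠ 0) :
    Submodule.span D {x} = hω.geSubmodule (ω x) := by
  apply le_antisymm
  · rw [Submodule.span_le, Set.singleton_subset_iff]
    exact Or.inr le_rfl
  · rintro y (rfl | hy)
    · exact Submodule.zero_mem _
    rcases eq_or_ne y 0 with rfl | hy0
    · exact Submodule.zero_mem _
    have hyx : y * x⁻¹ ∈ (1 : Submodule D K) := by
      rw [hω.mul_mem_one_iff hy0 (inv_ne_zero hx), hω.map_inv hx]
      linarith
    obtain ⟨d, hd⟩ := Submodule.mem_one.mp hyx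
    exact Submodule.mem_span_singleton.mpr
      ⟨d, by rw [Algebra.smul_def, hd, mul_assoc, inv_mul_cancel₀ hx, mul_one]⟩

theorem bddBelow_valueSet_geSubmodule (β : ℝ) : BddBelow (valueSet ω (hω.geSubmodule β)) := by
  refine ⟨β, ?_⟩
  rintro _ ⟨y, ⟨hy, hy0⟩, rfl⟩
  exact hy.resolve_left hy0

theorem bddBelow_valueSet_of_isFractional [Nontrivial D] [IsFractionRing D K]
    {I : Submodule D K} (hI : IsFractional (nonZeroDivisors D) I) :
    BddBelow (valueSet ω I) := by
  obtain ⟨a, ha, haI⟩ := hI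
  have ha0 : algebraMap D K a ≠ 0 := IsFractionRing.to_map_ne_zero_of_mem_nonZeroDivisors ha
  refine ⟨-ω (algebraMap D K a), ?_⟩
  rintro _ ⟨y, ⟨hy, hy0⟩, rfl⟩
  have hay : algebraMap D K a * y ∈ (1 : Submodule D K) := by
    obtain ⟨d, hd⟩ := haI y hy
    exact Submodule.mem_one.mpr ⟨d, by rw [hd, Algebra.smul_def]⟩
  linarith [(hω.mul_mem_one_iff ha0 hy0).mp hay]

theorem one_div_eq_geSubmodule {I : Submodule D K} (hI : I ≠ ⊥)
    (hbdd : BddBelow (valueSet ω I)) :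
    (1 : Submodule D K) / I = hω.geSubmodule (-sInf (valueSet ω I)) := by
  obtain ⟨y₀, hy₀, hy₀0⟩ := Submodule.exists_mem_ne_zero_of_ne_bot hI
  have hne : (valueSet ω I).Nonempty := ⟨ω y₀, y₀, ⟨hy₀, hy₀0⟩, rfl⟩
  ext z
  rw [Submodule.mem_div_iff_forall_mul_mem, mem_geSubmodule, neg_le, le_csInf_iff hbdd hne]
  rcases eq_or_ne z 0 with rfl | hz
  · simp only [zero_mul, Submodule.zero_mem, implies_true, true_or]
  simp only [hz, false_or, valueSet, Set.forall_mem_image, Set.mem_sdiff,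
    Set.mem_singleton_iff, SetLike.mem_coe, and_imp]
  refine forall₂_congr fun y hy => ⟨fun h hy0 => ?_, fun h => ?_⟩
  · linarith [(hω.mul_mem_one_iff hz hy0).mp h]
  · rcases eq_or_ne y 0 with rfl | hy0
    · simp only [mul_zero, Submodule.zero_mem]
    exact (hω.mul_mem_one_iff hz hy0).mpr (by linarith [h hy0])

variable (hdense : HasDenseValues ω)
include hdense

theorem geSubmodule_le_geSubmodule_iff {β γ : ℝ} :
    hω.geSubmodule β ≤ hω.geSubmodule γ ↔ γ ≤ β := by
  refine ⟨fun h => le_of_not_gt fun hβγ => ?_, fun h y hy => ?_⟩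
  · obtain ⟨y, hy0, hβy, hyγ⟩ := hdense β γ hβγ
    linarith [(h (Or.inr hβy.le : y ∈ hω.geSubmodule β)).resolve_left hy0]
  · exact hy.imp_right h.trans

theorem geSubmodule_ne_bot (β : ℝ) : hω.geSubmodule β ≠ ⊥ := by
  obtain ⟨x, hx0, hβx, -⟩ := hdense β (β + 1) (by linarith)
  exact (Submodule.ne_bot_iff _).mpr ⟨x, Or.inr hβx.le, hx0⟩

theorem csInf_valueSet_geSubmodule (β : ℝ) : sInf (valueSet ω (hω.geSubmodule β)) = β := by
  obtain ⟨x, hx0, hβx, -⟩ := hdense β (β + 1) (by linarith)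
  refine csInf_eq_of_forall_ge_of_forall_gt_exists_lt ⟨ω x, x, ⟨Or.inr hβx.le, hx0⟩, rfl⟩
    ?_ fun w hw => ?_
  · rintro _ ⟨y, ⟨hy, hy0⟩, rfl⟩
    exact hy.resolve_left hy0
  · obtain ⟨y, hy0, hβy, hyw⟩ := hdense β w hw
    exact ⟨ω y, ⟨y, ⟨Or.inr hβy.le, hy0⟩, rfl⟩, hyw⟩

theorem one_div_geSubmodule (β : ℝ) :
    (1 : Submodule D K) / hω.geSubmodule β = hω.geSubmodule (-β) := by
  rw [hω.one_div_eq_geSubmodule (hω.geSubmodule_ne_bot hdense β)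
    (hω.bddBelow_valueSet_geSubmodule β), hω.csInf_valueSet_geSubmodule hdense]

theorem vOp_eq_geSubmodule {I : Submodule D K} (hI : I ≠ ⊥) (hbdd : BddBelow (valueSet ω I)) :
    vOp D K I = hω.geSubmodule (sInf (valueSet ω I)) := by
  rw [vOp, hω.one_div_eq_geSubmodule hI hbdd, hω.one_div_geSubmodule hdense, neg_neg]

theorem vOp_geSubmodule (β : ℝ) : vOp D K (hω.geSubmodule β) = hω.geSubmodule β := by
  rw [vOp, hω.one_div_geSubmodule hdense, hω.one_div_geSubmodule hdense, neg_neg]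

theorem isFractional_geSubmodule [IsFractionRing D K] (β : ℝ) :
    IsFractional (nonZeroDivisors D) (hω.geSubmodule β) := by
  obtain ⟨x, hx0, -, hxβ⟩ := hdense (β - 1) β (by linarith)
  refine FractionalIdeal.isFractional_of_le
    (J := ⟨Submodule.span D {x}, FractionalIdeal.isFractional_span_singleton x⟩) ?_
  change _ ≤ Submodule.span D {x}
  rw [hω.span_singleton_eq_geSubmodule hx0, hω.geSubmodule_le_geSubmodule_iff hdense]
  exact hxβ.le

theorem phiVal_geSubmodule (β : ℝ) : phiVal D K ω (hω.geSubmodule β) = β := by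
  have hle : ∀ x : K, x ≠ 0 → (hω.geSubmodule β ≤ Submodule.span D {x} ↔ ω x ≤ β) :=
    fun x hx => by
      rw [hω.span_singleton_eq_geSubmodule hx, hω.geSubmodule_le_geSubmodule_iff hdense]
  obtain ⟨x, hx0, -, hxβ⟩ := hdense (β - 1) β (by linarith)
  refine csSup_eq_of_forall_le_of_forall_lt_exists_gt
    ⟨ω x, x, hx0, (hle x hx0).mpr hxβ.le, rfl⟩ ?_ fun w hw => ?_
  · rintro _ ⟨y, hy0, hy, rfl⟩
    exact (hle y hy0).mp hy
  · obtain ⟨y, hy0, hwy, hyβ⟩ := hdense w β hw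
    exact ⟨ω y, ⟨y, hy0, (hle y hy0).mpr hyβ.le, rfl⟩, hwy⟩

theorem geSubmodule_injective : Function.Injective (hω.geSubmodule : ℝ → Submodule D K) :=
  Function.LeftInverse.injective (hω.phiVal_geSubmodule hdense)

end IsRealValuation

theorem phiVal_surjective_and_phiVal_mem_valueGroup_iff_principal_general
    (D K : Type*) [CommRing D] [IsDomain D] [Field K] [Algebra D K] [IsFractionRing D K]
    (ω : K → ℝ)
    (hhom : ∀ x y : K, x ≠ 0 → y ≠ 0 → ω (x * y) = ω x + ω y)
    (hmin : ∀ x y : K, x ≠ 0 → y ≠ 0 → x + y ≠ 0 → min (ω x) (ω y) ≤ ω (x + y))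
    -- `D = {x ∈ K : x = 0 ∨ ω(x) ≥ 0}`:
    (hD : ∀ x : K, (∃ d : D, algebraMap D K d = x) ↔ x = 0 ∨ 0 ≤ ω x)
    (hdense : ∀ a b : ℝ, a < b → ∃ x : K, x ≠ 0 ∧ a < ω x ∧ ω x < b) :
    -- `φ` is surjective from the divisorial fractional ideals onto `ℝ` …
    (∀ α : ℝ, ∃ I : Submodule D K, I ≠ ⊥ ∧ IsFractional (nonZeroDivisors D) I ∧
      vOp D K I = I ∧ phiVal D K ω I = α) ∧
    -- … and `φ(I) ∈ G = ω(K^×)` iff `I` is a nonzero principal fractional ideal: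
    (∀ I : Submodule D K, I ≠ ⊥ → IsFractional (nonZeroDivisors D) I → vOp D K I = I →
      ((∃ x : K, x ≠ 0 ∧ ω x = phiVal D K ω I) ↔
        ∃ x : K, x ≠ 0 ∧ I = Submodule.span D {x})) := by
  have hω : IsRealValuation D ω := ⟨hhom, hmin, hD⟩
  refine ⟨fun α => ⟨hω.geSubmodule α, hω.geSubmodule_ne_bot hdense α,
    hω.isFractional_geSubmodule hdense α, hω.vOp_geSubmodule hdense α,
    hω.phiVal_geSubmodule hdense α⟩, fun I hI hfrac hv => ?_⟩
  obtain ⟨β, rfl⟩ : ∃ β, I = hω.geSubmodule β :=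
    ⟨_, hv.symm.trans <|
      hω.vOp_eq_geSubmodule hdense hI (hω.bddBelow_valueSet_of_isFractional hfrac)⟩
  rw [hω.phiVal_geSubmodule hdense]
  refine exists_congr fun x => and_congr_right fun hx => ?_
  rw [hω.span_singleton_eq_geSubmodule hx, (hω.geSubmodule_injective hdense).eq_iff, eq_comm]

/-- **Lemmas 2.10 and 2.11.** Let `D` be a one-dimensional valuation domain, not a DVR, with
quotient field `K`, valuation `ω : K^× → ℝ` and value group `G = ω(K^×)` dense in `ℝ`.  Then
`φ`, restricted to divisorial fractional ideals, is surjective onto `ℝ`; and for a divisorial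
fractional ideal `I`, `φ(I) ∈ G` if and only if `I` is a nonzero principal fractional
ideal. -/
theorem phiVal_surjective_and_phiVal_mem_valueGroup_iff_principal
    (D K : Type*) [CommRing D] [IsDomain D] [Field K] [Algebra D K] [IsFractionRing D K]
    (ω : K → ℝ)
    (hhom : ∀ x y : K, x ≠ 0 → y ≠ 0 → ω (x * y) = ω x + ω y)
    (hmin : ∀ x y : K, x ≠ 0 → y ≠ 0 → x + y ≠ 0 → min (ω x) (ω y) ≤ ω (x + y))
    -- `D = {x ∈ K : x = 0 ∨ ω(x) ≥ 0}`:
    (hD : ∀ x : K, (∃ d : D, algebraMap D K d = x) ↔ x = 0 ∨ 0 ≤ ω x)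
    -- `D` is not a DVR, i.e. the value group `G = ω(K^×)` is dense in `ℝ`:
    (hnotdvr : ¬ IsDiscreteValuationRing D)
    (hdense : ∀ a b : ℝ, a < b → ∃ x : K, x ≠ 0 ∧ a < ω x ∧ ω x < b) :
    -- `φ` is surjective from the divisorial fractional ideals onto `ℝ` …
    (∀ α : ℝ, ∃ I : Submodule D K, I ≠ ⊥ ∧ IsFractional (nonZeroDivisors D) I ∧
      vOp D K I = I ∧ phiVal D K ω I = α) ∧
    -- … and `φ(I) ∈ G = ω(K^×)` iff `I` is a nonzero principal fractional ideal:
    (∀ I : Submodule D K, I ≠ ⊥ → IsFractional (nonZeroDivisors D) I → vOp D K I = I →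
      ((∃ x : K, x ≠ 0 ∧ ω x = phiVal D K ω I) ↔
        ∃ x : K, x ≠ 0 ∧ I = Submodule.span D {x})) :=
  phiVal_surjective_and_phiVal_mem_valueGroup_iff_principal_general D K ω hhom hmin hD hdense
end
end
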